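/- arXiv:math/0412167 — 9 statements merged into one kernel-verified Lean document; each statement's English description precedes it below -/
import Mathlib

section
/- The partial sums of the series ∑ sin(kω)/k are uniformly bounded: there exists a constant M such that for all positive integers m and all ω ∈ [0, 2π], |∑_{k=1}^{m} sin(kω)/k| ≤ M. -/
open Real Finset

-- Abel summation identity
lemma abel_id (c b : ℕ → ℝ) (a : ℕ) : ∀ n, a ≤ n →
    ∑ k ∈ Finset.Ico a n, c k * b k =
      ∑ k ∈ Finset.Ico a n, (c k - c (k+1)) * (∑ j ∈ Finset.Ico a (k+1), b j)
        + c n * ∑ j ∈ Finset.Ico a n, b j := by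
  intro n hn
  induction n with
  | zero => interval_cases a; simp
  | succ n ih =>
    rcases Nat.lt_or_ge a (n+1) with h | h
    · have han : a ≤ n := Nat.lt_succ_iff.mp h
      rw [Finset.sum_Ico_succ_top han, Finset.sum_Ico_succ_top han,
        Finset.sum_Ico_succ_top han, ih han]
      ring
    · have : a = n + 1 := le_antisymm hn h
      subst this; simp

lemma abel_bound (c b : ℕ → ℝ) (a n : ℕ) (han : a ≤ n) (C : ℝ)
    (hC : ∀ i j, |∑ k ∈ Finset.Ico i j, b k| ≤ C)
    (hc : ∀ k, c (k+1) ≤ c k) (hc0 : ∀ k, 0 ≤ c k) :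
    |∑ k ∈ Finset.Ico a n, c k * b k| ≤ c a * C := by
  have hC0 : 0 ≤ C := le_trans (abs_nonneg _) (hC 0 0)
  rw [abel_id c b a n han]
  have h1 : |∑ k ∈ Finset.Ico a n, (c k - c (k+1)) * (∑ j ∈ Finset.Ico a (k+1), b j)|
      ≤ ∑ k ∈ Finset.Ico a n, (c k - c (k+1)) * C := by
    refine (Finset.abs_sum_le_sum_abs _ _).trans (Finset.sum_le_sum fun k _ => ?_)
    rw [abs_mul, abs_of_nonneg (by linarith [hc k])]
    exact mul_le_mul_of_nonneg_left (hC _ _) (by linarith [hc k])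
  have h2 : ∑ k ∈ Finset.Ico a n, (c k - c (k+1)) * C = (c a - c n) * C := by
    rw [← Finset.sum_mul]
    congr 1
    have := Finset.sum_Ico_eq_sub (fun k => c k - c (k+1)) han
    rw [this]
    have e1 : ∀ m : ℕ, ∑ k ∈ Finset.range m, (c k - c (k+1)) = c 0 - c m := by
      intro m
      have := Finset.sum_range_sub (fun k => c (k)) m
      -- sum of (c (k+1) - c k) = c m - c 0
      have h := Finset.sum_range_sub (fun k => c k) m
      calc ∑ k ∈ Finset.range m, (c k - c (k+1))
          = -∑ k ∈ Finset.range m, (c (k+1) - c k) := by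
            rw [← Finset.sum_neg_distrib]; exact Finset.sum_congr rfl (by intros; ring)
        _ = -(c m - c 0) := by rw [h]
        _ = c 0 - c m := by ring
    rw [e1, e1]; ring
  have h3 : |c n * ∑ j ∈ Finset.Ico a n, b j| ≤ c n * C := by
    rw [abs_mul, abs_of_nonneg (hc0 n)]
    exact mul_le_mul_of_nonneg_left (hC _ _) (hc0 n)
  calc |∑ k ∈ Finset.Ico a n, (c k - c (k+1)) * (∑ j ∈ Finset.Ico a (k+1), b j)
        + c n * ∑ j ∈ Finset.Ico a n, b j|
      ≤ |∑ k ∈ Finset.Ico a n, (c k - c (k+1)) * (∑ j ∈ Finset.Ico a (k+1), b j)|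
        + |c n * ∑ j ∈ Finset.Ico a n, b j| := abs_add_le _ _
    _ ≤ (c a - c n) * C + c n * C := add_le_add (h1.trans (le_of_eq h2)) h3
    _ = c a * C := by ring

-- bound on partial sums of sin((k+1)ω)
lemma sin_sum_bound {ω : ℝ} (hs : 0 < Real.sin (ω / 2)) (i j : ℕ) :
    |∑ k ∈ Finset.Ico i j, Real.sin ((k + 1) * ω)| ≤ 1 / Real.sin (ω / 2) := by
  set F : ℕ → ℝ := fun k => -Real.cos ((k + 1/2) * ω) / (2 * Real.sin (ω / 2)) with hF
  have key : ∀ k : ℕ, Real.sin ((k + 1) * ω) = F (k+1) - F k := by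
    intro k
    have hcc := Real.cos_sub_cos ((k + 1/2 : ℝ) * ω) ((k + 1 + 1/2 : ℝ) * ω)
    have e1 : ((k + 1/2 : ℝ) * ω + (k + 1 + 1/2) * ω) / 2 = (k+1) * ω := by ring
    have e2 : ((k + 1/2 : ℝ) * ω - (k + 1 + 1/2) * ω) / 2 = -(ω/2) := by ring
    rw [e1, e2, Real.sin_neg] at hcc
    have e3 : F (k+1) - F k
        = (Real.cos ((k + 1/2 : ℝ) * ω) - Real.cos ((k + 1 + 1/2 : ℝ) * ω))
          / (2 * Real.sin (ω / 2)) := by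
      simp only [hF]; push_cast; ring
    rw [e3, hcc]
    field_simp
  have tele : ∀ m : ℕ, ∑ k ∈ Finset.range m, Real.sin ((k + 1) * ω) = F m - F 0 := by
    intro m
    calc ∑ k ∈ Finset.range m, Real.sin ((k + 1) * ω)
        = ∑ k ∈ Finset.range m, (F (k+1) - F k) := Finset.sum_congr rfl (fun k _ => key k)
      _ = F m - F 0 := Finset.sum_range_sub F m
  rcases Nat.lt_or_ge j i with h | h
  · rw [Finset.Ico_eq_empty (by omega)]
    simp [le_of_lt hs, one_div_nonneg.mpr hs.le]
  · rw [Finset.sum_Ico_eq_sub _ h, tele, tele]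
    have hFb : ∀ m : ℕ, |F m| ≤ 1 / (2 * Real.sin (ω / 2)) := by
      intro m
      simp only [hF]
      rw [abs_div, abs_neg, abs_of_pos (by linarith : (0:ℝ) < 2 * Real.sin (ω/2))]
      gcongr
      exact Real.abs_cos_le_one _
    calc |F j - F 0 - (F i - F 0)| = |F j - F i| := by ring_nf
      _ ≤ |F j| + |F i| := abs_sub _ _
      _ ≤ 1 / (2 * Real.sin (ω / 2)) + 1 / (2 * Real.sin (ω / 2)) :=
          add_le_add (hFb j) (hFb i)
      _ = 1 / Real.sin (ω / 2) := by
          rw [← add_div, one_add_one_eq_two,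
            div_eq_div_iff (by linarith) hs.ne']
          ring

-- main bound for ω ∈ [0, π]
lemma main_bound {ω : ℝ} (h0 : 0 ≤ ω) (hπ : ω ≤ π) (m : ℕ) :
    |∑ k ∈ Finset.range m, Real.sin ((k + 1) * ω) / (k + 1)| ≤ 1 + 2 * π := by
  have hπ0 := Real.pi_pos
  rcases eq_or_lt_of_le h0 with rfl | hω
  · simp; positivity
  -- ω > 0
  have hs : 0 < Real.sin (ω / 2) :=
    Real.sin_pos_of_pos_of_lt_pi (by linarith) (by linarith)
  set n : ℕ := ⌈1 / ω⌉₊ with hn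
  have hn_low : 1 ≤ (n : ℝ) * ω := by
    have h1 : 1 / ω ≤ (n : ℝ) := Nat.le_ceil _
    rw [div_le_iff₀ hω] at h1
    linarith
  have hn_high : (n : ℝ) * ω ≤ 1 + ω := by
    have h1 : (n : ℝ) < 1 / ω + 1 := Nat.ceil_lt_add_one (by positivity)
    have h2 : (1 / ω) * ω = 1 := by field_simp
    nlinarith
  have term_bound : ∀ k : ℕ, |Real.sin ((k + 1) * ω) / (k + 1)| ≤ ω := by
    intro k
    have h1 : |Real.sin (((k:ℝ) + 1) * ω)| ≤ ((k:ℝ) + 1) * ω :=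
      Real.abs_sin_le_abs.trans_eq (abs_of_nonneg (by positivity))
    rw [abs_div, abs_of_pos (by positivity : (0:ℝ) < (k:ℝ) + 1),
      div_le_iff₀ (by positivity : (0:ℝ) < (k:ℝ) + 1)]
    nlinarith
  have part1 : ∀ j : ℕ, j ≤ n →
      |∑ k ∈ Finset.range j, Real.sin ((k + 1) * ω) / (k + 1)| ≤ 1 + π := by
    intro j hj
    calc |∑ k ∈ Finset.range j, Real.sin ((k + 1) * ω) / (k + 1)|
        ≤ ∑ k ∈ Finset.range j, |Real.sin ((k + 1) * ω) / (k + 1)| :=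
          Finset.abs_sum_le_sum_abs _ _
      _ ≤ ∑ _k ∈ Finset.range j, ω := Finset.sum_le_sum fun k _ => term_bound k
      _ = (j : ℝ) * ω := by rw [Finset.sum_const, Finset.card_range, nsmul_eq_mul]
      _ ≤ (n : ℝ) * ω := by
          have : (j : ℝ) ≤ (n : ℝ) := Nat.cast_le.mpr hj
          nlinarith
      _ ≤ 1 + ω := hn_high
      _ ≤ 1 + π := by linarith
  rcases le_or_gt m n with hmn | hnm
  · exact (part1 m hmn).trans (by linarith)
  -- n < m : split at n
  have hsplit : ∑ k ∈ Finset.range m, Real.sin ((k + 1) * ω) / (k + 1)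
      = ∑ k ∈ Finset.range n, Real.sin ((k + 1) * ω) / (k + 1)
        + ∑ k ∈ Finset.Ico n m, Real.sin ((k + 1) * ω) / (k + 1) := by
    rw [Finset.range_eq_Ico, Finset.range_eq_Ico]
    exact (Finset.sum_Ico_consecutive (fun k : ℕ => Real.sin (((k:ℝ) + 1) * ω) / ((k:ℝ) + 1)) (Nat.zero_le n) hnm.le).symm
  have part2 : |∑ k ∈ Finset.Ico n m, Real.sin ((k + 1) * ω) / (k + 1)| ≤ π := by
    have hmain : |∑ k ∈ Finset.Ico n m,
        (1 / ((k:ℝ) + 1)) * Real.sin ((k + 1) * ω)|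
        ≤ (1 / ((n:ℝ) + 1)) * (1 / Real.sin (ω / 2)) := by
      apply abel_bound (fun k => 1 / ((k:ℝ) + 1))
        (fun k => Real.sin ((k + 1) * ω)) n m hnm.le _ (sin_sum_bound hs)
      · intro k
        apply one_div_le_one_div_of_le (by positivity)
        push_cast; linarith
      · intro k; positivity
    have heq : ∑ k ∈ Finset.Ico n m, Real.sin ((k + 1) * ω) / (k + 1)
        = ∑ k ∈ Finset.Ico n m, (1 / ((k:ℝ) + 1)) * Real.sin ((k + 1) * ω) :=
      Finset.sum_congr rfl fun k _ => by ring
    rw [heq]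
    refine hmain.trans ?_
    -- (1/(n+1)) * (1/sin(ω/2)) ≤ π
    have hJ : ω / π ≤ Real.sin (ω / 2) := by
      have h1 := Real.mul_le_sin (x := ω / 2) (by linarith) (by linarith)
      have h2 : 2 / π * (ω / 2) = ω / π := by field_simp
      linarith
    have hJ0 : 0 < ω / π := by positivity
    have hA : 1 / Real.sin (ω / 2) ≤ π / ω := by
      have := one_div_le_one_div_of_le hJ0 hJ
      rwa [one_div_div] at this
    have hB : 1 / ((n:ℝ) + 1) ≤ ω := by
      rw [div_le_iff₀ (by positivity)]
      nlinarith
    calc (1 / ((n:ℝ) + 1)) * (1 / Real.sin (ω / 2))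
        ≤ ω * (π / ω) := by
          apply mul_le_mul hB hA (by positivity) (by linarith)
      _ = π := by field_simp
  rw [hsplit]
  calc |∑ k ∈ Finset.range n, Real.sin ((k + 1) * ω) / (k + 1)
        + ∑ k ∈ Finset.Ico n m, Real.sin ((k + 1) * ω) / (k + 1)|
      ≤ |∑ k ∈ Finset.range n, Real.sin ((k + 1) * ω) / (k + 1)|
        + |∑ k ∈ Finset.Ico n m, Real.sin ((k + 1) * ω) / (k + 1)| := abs_add_le _ _
    _ ≤ (1 + π) + π := add_le_add (part1 n le_rfl) part2
    _ = 1 + 2 * π := by ring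

theorem uniform_bound_sin_series :
    ∃ M : ℝ, ∀ m : ℕ, 0 < m → ∀ ω ∈ Set.Icc (0 : ℝ) (2 * π),
      |∑ k ∈ Finset.Icc 1 m, Real.sin (k * ω) / k| ≤ M := by
  refine ⟨1 + 2 * π, fun m _ ω hω => ?_⟩
  obtain ⟨hω0, hω2⟩ := hω
  have hπ0 := Real.pi_pos
  have conv : ∀ θ : ℝ, ∑ k ∈ Finset.Icc 1 m, Real.sin (k * θ) / k
      = ∑ k ∈ Finset.range m, Real.sin ((k + 1) * θ) / (k + 1) := by
    intro θ
    rw [← Finset.Ico_add_one_right_eq_Icc, Finset.sum_Ico_eq_sum_range]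
    refine Finset.sum_congr (by simp) fun k _ => ?_
    push_cast
    rw [add_comm 1 (k:ℝ)]
  rw [conv]
  rcases le_or_gt ω π with h | h
  · exact main_bound hω0 h m
  · set ω' : ℝ := 2 * π - ω with hω'
    have hkey : ∀ k : ℕ, Real.sin (((k:ℝ) + 1) * ω) = -Real.sin (((k:ℝ) + 1) * ω') := by
      intro k
      have e : ((k:ℝ) + 1) * ω = -(((k:ℝ) + 1) * ω') + (k + 1 : ℕ) * (2 * π) := by
        rw [hω']; push_cast; ring
      rw [e, Real.sin_add_nat_mul_two_pi, Real.sin_neg]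
    have hsum : ∑ k ∈ Finset.range m, Real.sin ((k + 1) * ω) / (k + 1)
        = -∑ k ∈ Finset.range m, Real.sin ((k + 1) * ω') / (k + 1) := by
      rw [← Finset.sum_neg_distrib]
      refine Finset.sum_congr rfl fun k _ => ?_
      rw [hkey k]; ring
    rw [hsum, abs_neg]
    exact main_bound (by rw [hω']; linarith) (by rw [hω']; linarith) m
end

section
/- Suppose the process (X_k) with values bounded by A (i.e., ‖X_k‖ ≤ A almost surely) satisfies Devroye inequality with constant D for η-Hölder functions, and u : ℝ^d → ℝ is η-Hölder with constant L_u and u(0) = 0. Define the empirical covariance estimator Ĉ_k(n) = (1/k)∑_{j=1}^k u(X_j)u(X_{j+n}) − ((1/k)∑_{j=1}^k u(X_j))². Then var(Ĉ_k(n)) ≤ 16 D L_u⁴ A^{2η} (n+k)/k². -/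
open MeasureTheory ProbabilityTheory Finset

lemma my_variance_congr {Ω : Type*} [MeasurableSpace Ω] {μ : Measure Ω} {f g : Ω → ℝ}
    (h : f =ᵐ[μ] g) : variance f μ = variance g μ := by
  unfold ProbabilityTheory.variance ProbabilityTheory.evariance
  rw [integral_congr_ae h]
  congr 1
  apply lintegral_congr_ae
  filter_upwards [h] with ω hω
  rw [hω]

lemma my_clamp_lip (M a b : ℝ) : |max (-M) (min M a) - max (-M) (min M b)| ≤ |a - b| := by
  refine (abs_max_sub_max_le_max _ _ _ _).trans ?_
  simp only [sub_self, abs_zero]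
  refine max_le (abs_nonneg _) ?_
  refine (abs_min_sub_min_le_max _ _ _ _).trans ?_
  simp [abs_nonneg]

theorem covariance_estimator_variance_bound
    {Ω : Type*} [MeasurableSpace Ω] (P : Measure Ω) [IsProbabilityMeasure P]
    {d : ℕ} (X : ℕ → Ω → EuclideanSpace ℝ (Fin d))
    (η : ℝ) (hη : 0 < η) (hη1 : η ≤ 1)
    (A : ℝ) (hA : 0 < A) (hbdd : ∀ k, ∀ᵐ ω ∂P, ‖X k ω‖ ≤ A)
    (D : ℝ) (hD : 0 ≤ D)
    -- Devroye inequality for the process `(X_k)`: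
    (hDev : ∀ (m : ℕ) (K : (Fin m → EuclideanSpace ℝ (Fin d)) → ℝ) (L : Fin m → ℝ),
      (∀ (j : Fin m) (x y : Fin m → EuclideanSpace ℝ (Fin d)),
          (∀ i, i ≠ j → x i = y i) → |K x - K y| ≤ L j * ‖x j - y j‖ ^ η) →
      variance (fun ω => K (fun i => X (i : ℕ) ω)) P ≤ D * ∑ j, (L j) ^ 2)
    (u : EuclideanSpace ℝ (Fin d) → ℝ) (Lu : ℝ)
    (hu : ∀ x y, |u x - u y| ≤ Lu * ‖x - y‖ ^ η) (hu0 : u 0 = 0)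
    (n k : ℕ) (hk : 1 ≤ k) :
    variance (fun ω =>
        (1 / (k : ℝ)) * ∑ j ∈ Finset.Icc 1 k, u (X j ω) * u (X (j + n) ω) -
          ((1 / (k : ℝ)) * ∑ j ∈ Finset.Icc 1 k, u (X j ω)) ^ 2) P ≤
      16 * D * Lu ^ 4 * A ^ (2 * η) * ((n : ℝ) + k) / (k : ℝ) ^ 2 := by
  have hk0 : (0:ℝ) < k := by exact_mod_cast hk
  set M : ℝ := |Lu| * A ^ η with hMdef
  have hM : 0 ≤ M := mul_nonneg (abs_nonneg _) (Real.rpow_nonneg hA.le η)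
  have hMM : -M ≤ M := neg_le_self hM
  set v : EuclideanSpace ℝ (Fin d) → ℝ := fun x => max (-M) (min M (u x)) with hvdef
  have hvb : ∀ x, |v x| ≤ M := fun x =>
    abs_le.2 ⟨le_max_left _ _, max_le hMM (min_le_left _ _)⟩
  have hvh : ∀ x y, |v x - v y| ≤ |Lu| * ‖x - y‖ ^ η := by
    intro x y
    refine (my_clamp_lip M (u x) (u y)).trans ((hu x y).trans ?_)
    exact mul_le_mul_of_nonneg_right (le_abs_self _)
      (Real.rpow_nonneg (norm_nonneg _) _)
  have hub : ∀ x : EuclideanSpace ℝ (Fin d), ‖x‖ ≤ A → |u x| ≤ M := by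
    intro x hx
    have h0 := hu x 0
    rw [hu0, sub_zero, sub_zero] at h0
    calc |u x| ≤ Lu * ‖x‖ ^ η := h0
      _ ≤ |Lu| * ‖x‖ ^ η := mul_le_mul_of_nonneg_right (le_abs_self _)
          (Real.rpow_nonneg (norm_nonneg _) _)
      _ ≤ |Lu| * A ^ η := mul_le_mul_of_nonneg_left
          (Real.rpow_le_rpow (norm_nonneg _) hx hη.le) (abs_nonneg _)
  have hve : ∀ x : EuclideanSpace ℝ (Fin d), ‖x‖ ≤ A → v x = u x := by
    intro x hx
    have h := abs_le.1 (hub x hx)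
    simp only [hvdef]
    rw [min_eq_right h.2, max_eq_right h.1]
  set m := k + n + 1 with hm
  set G : (ℕ → ℝ) → ℝ := fun w =>
    (1/(k:ℝ)) * ∑ j ∈ Icc 1 k, w j * w (j+n) - ((1/(k:ℝ)) * ∑ j ∈ Icc 1 k, w j)^2
    with hGdef
  set ext : (Fin m → EuclideanSpace ℝ (Fin d)) → ℕ → EuclideanSpace ℝ (Fin d) :=
    fun x i => if h : i < m then x ⟨i, h⟩ else 0 with hextdef
  set K : (Fin m → EuclideanSpace ℝ (Fin d)) → ℝ := fun x => G (fun i => v (ext x i))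
    with hKdef
  set L : Fin m → ℝ := fun j =>
    ((if (j:ℕ) ∈ Icc 1 k then (3:ℝ) else 0) + (if (j:ℕ) ∈ Icc (n+1) (n+k) then (1:ℝ) else 0))
      * (M * |Lu|) / k with hLdef
  -- Hölder property of K
  have hHol : ∀ (j : Fin m) (x y : Fin m → EuclideanSpace ℝ (Fin d)),
      (∀ i, i ≠ j → x i = y i) → |K x - K y| ≤ L j * ‖x j - y j‖ ^ η := by
    intro j x y hxy
    set δ := ‖x j - y j‖ ^ η with hδdef
    have hδ : 0 ≤ δ := Real.rpow_nonneg (norm_nonneg _) _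
    set c := |Lu| * δ with hcdef
    have hc0 : 0 ≤ c := mul_nonneg (abs_nonneg _) hδ
    set w1 : ℕ → ℝ := fun i => v (ext x i) with hw1
    set w2 : ℕ → ℝ := fun i => v (ext y i) with hw2
    have hb1 : ∀ i, |w1 i| ≤ M := fun i => hvb _
    have hb2 : ∀ i, |w2 i| ≤ M := fun i => hvb _
    have hdiff : ∀ i, |w1 i - w2 i| ≤ (if i = (j:ℕ) then c else 0) := by
      intro i
      by_cases hi : i = (j:ℕ)
      · subst hi
        rw [if_pos rfl]
        have h1 : ext x (j:ℕ) = x j := by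
          simp only [hextdef]; rw [dif_pos j.isLt]
        have h2 : ext y (j:ℕ) = y j := by
          simp only [hextdef]; rw [dif_pos j.isLt]
        simp only [hw1, hw2, h1, h2]
        exact hvh _ _
      · rw [if_neg hi]
        have : w1 i = w2 i := by
          simp only [hw1, hw2, hextdef]
          split
          · rename_i h
            rw [hxy ⟨i, h⟩ (by simpa [Fin.ext_iff] using hi)]
          · rfl
        rw [this, sub_self, abs_zero]
    have hitenn : ∀ (p : Prop) [Decidable p], (0:ℝ) ≤ if p then c else 0 := by
      intro p _; split <;> simp [hc0]
    have hsum1 : ∑ i ∈ Icc 1 k, (if i = (j:ℕ) then c else 0)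
        = (if (j:ℕ) ∈ Icc 1 k then c else 0) := by
      rw [Finset.sum_ite_eq' (Icc 1 k) ((j:ℕ)) (fun _ => c)]
    have hsum2 : ∑ i ∈ Icc 1 k, (if i + n = (j:ℕ) then c else 0)
        = (if (j:ℕ) ∈ Icc (n+1) (n+k) then c else 0) := by
      by_cases hn : n + 1 ≤ (j:ℕ) ∧ (j:ℕ) ≤ n + k
      · rw [if_pos (by simp [mem_Icc]; omega)]
        rw [Finset.sum_eq_single ((j:ℕ) - n)]
        · rw [if_pos (by omega)]
        · intro b _ hb; rw [if_neg (by omega)]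
        · intro hmem
          exfalso; apply hmem; simp [mem_Icc]; omega
      · rw [if_neg (by simp [mem_Icc]; omega), Finset.sum_eq_zero]
        intro i hi
        simp only [mem_Icc] at hi
        rw [if_neg (by omega)]
    have hS : |∑ i ∈ Icc 1 k, w1 i - ∑ i ∈ Icc 1 k, w2 i|
        ≤ (if (j:ℕ) ∈ Icc 1 k then c else 0) := by
      rw [← Finset.sum_sub_distrib]
      refine (Finset.abs_sum_le_sum_abs _ _).trans ?_
      rw [← hsum1]
      exact Finset.sum_le_sum fun i _ => hdiff i
    have hT : |∑ i ∈ Icc 1 k, w1 i * w1 (i+n) - ∑ i ∈ Icc 1 k, w2 i * w2 (i+n)|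
        ≤ M * ((if (j:ℕ) ∈ Icc 1 k then c else 0) + (if (j:ℕ) ∈ Icc (n+1) (n+k) then c else 0)) := by
      rw [← Finset.sum_sub_distrib]
      refine (Finset.abs_sum_le_sum_abs _ _).trans ?_
      have hterm : ∀ i ∈ Icc 1 k, |w1 i * w1 (i+n) - w2 i * w2 (i+n)|
          ≤ M * (if i = (j:ℕ) then c else 0) + M * (if i + n = (j:ℕ) then c else 0) := by
        intro i _
        have e : w1 i * w1 (i+n) - w2 i * w2 (i+n)
            = (w1 i - w2 i) * w1 (i+n) + w2 i * (w1 (i+n) - w2 (i+n)) := by ring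
        rw [e]
        refine (abs_add_le _ _).trans ?_
        rw [abs_mul, abs_mul]
        have h1 : |w1 i - w2 i| * |w1 (i+n)| ≤ (if i = (j:ℕ) then c else 0) * M :=
          mul_le_mul (hdiff i) (hb1 _) (abs_nonneg _) (hitenn _)
        have h2 : |w2 i| * |w1 (i+n) - w2 (i+n)| ≤ M * (if i + n = (j:ℕ) then c else 0) :=
          mul_le_mul (hb2 i) (hdiff _) (abs_nonneg _) hM
        calc |w1 i - w2 i| * |w1 (i+n)| + |w2 i| * |w1 (i+n) - w2 (i+n)|
            ≤ (if i = (j:ℕ) then c else 0) * M + M * (if i + n = (j:ℕ) then c else 0) := by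
              linarith
          _ = M * (if i = (j:ℕ) then c else 0) + M * (if i + n = (j:ℕ) then c else 0) := by
              ring
      refine (Finset.sum_le_sum hterm).trans ?_
      rw [Finset.sum_add_distrib, ← Finset.mul_sum, ← Finset.mul_sum, hsum1, hsum2, mul_add]
    -- bound on each averaged sum
    have hSb : ∀ (w : ℕ → ℝ), (∀ i, |w i| ≤ M) → |(1/(k:ℝ)) * ∑ i ∈ Icc 1 k, w i| ≤ M := by
      intro w hw
      rw [abs_mul]
      have h1 : |∑ i ∈ Icc 1 k, w i| ≤ (k:ℝ) * M := by
        refine (Finset.abs_sum_le_sum_abs _ _).trans ?_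
        refine (Finset.sum_le_sum fun i _ => hw i).trans ?_
        rw [Finset.sum_const, Nat.card_Icc]
        simp [nsmul_eq_mul]
      have h2 : |(1:ℝ)/(k:ℝ)| = 1/(k:ℝ) := abs_of_pos (by positivity)
      rw [h2]
      calc (1/(k:ℝ)) * |∑ i ∈ Icc 1 k, w i| ≤ (1/(k:ℝ)) * ((k:ℝ) * M) := by
            exact mul_le_mul_of_nonneg_left h1 (by positivity)
        _ = M := by field_simp
    -- square difference
    have hSq : |((1/(k:ℝ)) * ∑ i ∈ Icc 1 k, w1 i)^2 - ((1/(k:ℝ)) * ∑ i ∈ Icc 1 k, w2 i)^2|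
        ≤ 2*M * ((1/(k:ℝ)) * (if (j:ℕ) ∈ Icc 1 k then c else 0)) := by
      set a := (1/(k:ℝ)) * ∑ i ∈ Icc 1 k, w1 i with ha
      set b := (1/(k:ℝ)) * ∑ i ∈ Icc 1 k, w2 i with hb
      have e : a^2 - b^2 = (a+b)*(a-b) := by ring
      rw [e, abs_mul]
      have h1 : |a+b| ≤ 2*M := by
        refine (abs_add_le _ _).trans ?_
        have := hSb w1 hb1; have := hSb w2 hb2; linarith
      have h2 : |a - b| ≤ (1/(k:ℝ)) * (if (j:ℕ) ∈ Icc 1 k then c else 0) := by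
        have e2 : a - b = (1/(k:ℝ)) * (∑ i ∈ Icc 1 k, w1 i - ∑ i ∈ Icc 1 k, w2 i) := by
          rw [ha, hb]; ring
        rw [e2, abs_mul, abs_of_pos (show (0:ℝ) < 1/(k:ℝ) by positivity)]
        exact mul_le_mul_of_nonneg_left hS (by positivity)
      exact mul_le_mul h1 h2 (abs_nonneg _) (by positivity)
    -- assemble
    have hKxy : K x - K y
        = (1/(k:ℝ)) * (∑ i ∈ Icc 1 k, w1 i * w1 (i+n) - ∑ i ∈ Icc 1 k, w2 i * w2 (i+n))
          - (((1/(k:ℝ)) * ∑ i ∈ Icc 1 k, w1 i)^2 - ((1/(k:ℝ)) * ∑ i ∈ Icc 1 k, w2 i)^2) := by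
      simp only [hKdef, hGdef]
      ring
    rw [hKxy]
    refine (abs_sub _ _).trans ?_
    have hA1 : |(1/(k:ℝ)) * (∑ i ∈ Icc 1 k, w1 i * w1 (i+n) - ∑ i ∈ Icc 1 k, w2 i * w2 (i+n))|
        ≤ (1/(k:ℝ)) * (M * ((if (j:ℕ) ∈ Icc 1 k then c else 0) + (if (j:ℕ) ∈ Icc (n+1) (n+k) then c else 0))) := by
      rw [abs_mul, abs_of_pos (show (0:ℝ) < 1/(k:ℝ) by positivity)]
      exact mul_le_mul_of_nonneg_left hT (by positivity)
    refine (add_le_add hA1 hSq).trans ?_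
    simp only [hLdef, hcdef, hδdef]
    by_cases hm1 : (j:ℕ) ∈ Icc 1 k <;> by_cases hm2 : (j:ℕ) ∈ Icc (n+1) (n+k) <;>
      simp only [hm1, hm2, if_true, if_false, ite_true, ite_false] <;>
      (apply le_of_eq; field_simp; try ring)
  -- a.e. equality of the estimator with `K ∘ X`
  have hae : (fun ω =>
      (1 / (k : ℝ)) * ∑ j ∈ Finset.Icc 1 k, u (X j ω) * u (X (j + n) ω) -
        ((1 / (k : ℝ)) * ∑ j ∈ Finset.Icc 1 k, u (X j ω)) ^ 2)
      =ᵐ[P] (fun ω => K (fun i : Fin m => X (i:ℕ) ω)) := by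
    have h1 : ∀ᵐ ω ∂P, ∀ i : ℕ, ‖X i ω‖ ≤ A := (ae_all_iff).2 hbdd
    filter_upwards [h1] with ω hω
    have hcoord : ∀ i : ℕ, i < m → v (ext (fun i' : Fin m => X (i':ℕ) ω) i) = u (X i ω) := by
      intro i hi
      simp only [hextdef]
      rw [dif_pos hi]
      exact hve _ (hω i)
    simp only [hKdef, hGdef]
    congr 1
    · congr 1
      refine Finset.sum_congr rfl fun i hi => ?_
      simp only [mem_Icc] at hi
      rw [hcoord i (by omega), hcoord (i+n) (by omega)]
    · congr 2
      refine Finset.sum_congr rfl fun i hi => ?_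
      simp only [mem_Icc] at hi
      rw [hcoord i (by omega)]
  rw [my_variance_congr hae]
  refine (hDev m K L hHol).trans ?_
  have hgen : ∀ c C : ℝ, c^2 ≤ C → (c*(M*|Lu|)/(k:ℝ))^2 ≤ C * ((M*|Lu|)^2/(k:ℝ)^2) := by
    intro c C hC
    have he : (c*(M*|Lu|)/(k:ℝ))^2 = c^2 * ((M*|Lu|)^2/(k:ℝ)^2) := by
      field_simp
    rw [he]
    exact mul_le_mul_of_nonneg_right hC (by positivity)
  have hLsq : ∀ j : Fin m, L j ^ 2 ≤
      ((if (j:ℕ) ∈ Icc 1 k then (15:ℝ) else 0) + (if (j:ℕ) ∈ Icc (n+1) (n+k) then (1:ℝ) else 0))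
        * ((M*|Lu|)^2 / (k:ℝ)^2) := by
    intro j
    simp only [hLdef]
    by_cases hm1 : (j:ℕ) ∈ Icc 1 k <;> by_cases hm2 : (j:ℕ) ∈ Icc (n+1) (n+k) <;>
      simp only [hm1, hm2, if_true, if_false, ite_true, ite_false] <;>
      exact hgen _ _ (by norm_num)
  have hsum15 : ∑ j : Fin m, (if (j:ℕ) ∈ Icc 1 k then (15:ℝ) else 0) = 15 * k := by
    rw [Fin.sum_univ_eq_sum_range (fun i => if i ∈ Icc 1 k then (15:ℝ) else 0) m]
    rw [Finset.sum_ite_mem]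
    have hi : range m ∩ Icc 1 k = Icc 1 k := by
      ext i; simp only [mem_inter, mem_range, mem_Icc]; omega
    rw [hi, Finset.sum_const, Nat.card_Icc]
    have : k + 1 - 1 = k := by omega
    rw [this]
    simp [nsmul_eq_mul]; ring
  have hsum1' : ∑ j : Fin m, (if (j:ℕ) ∈ Icc (n+1) (n+k) then (1:ℝ) else 0) = k := by
    rw [Fin.sum_univ_eq_sum_range (fun i => if i ∈ Icc (n+1) (n+k) then (1:ℝ) else 0) m]
    rw [Finset.sum_ite_mem]
    have hi : range m ∩ Icc (n+1) (n+k) = Icc (n+1) (n+k) := by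
      ext i; simp only [mem_inter, mem_range, mem_Icc]; omega
    rw [hi, Finset.sum_const, Nat.card_Icc]
    have : n + k + 1 - (n + 1) = k := by omega
    rw [this]
    simp [nsmul_eq_mul]
  have hsumL : ∑ j, L j ^2 ≤ 16*(k:ℝ) * ((M*|Lu|)^2/(k:ℝ)^2) := by
    refine (Finset.sum_le_sum fun j _ => hLsq j).trans ?_
    rw [← Finset.sum_mul, Finset.sum_add_distrib, hsum15, hsum1']
    apply le_of_eq
    ring
  have hB : (M*|Lu|)^2 = Lu^4 * A^(2*η) := by
    have h1 : (A ^ η)^2 = A ^ (2*η) := by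
      rw [← Real.rpow_natCast (A^η) 2, ← Real.rpow_mul hA.le]
      norm_num [mul_comm]
    have h2 : |Lu|^2 = Lu^2 := sq_abs Lu
    calc (M*|Lu|)^2 = (|Lu|^2)^2 * (A^η)^2 := by rw [hMdef]; ring
      _ = Lu^4 * A^(2*η) := by rw [h1, h2]; ring
  calc D * ∑ j, L j^2 ≤ D * (16*(k:ℝ) * ((M*|Lu|)^2/(k:ℝ)^2)) :=
        mul_le_mul_of_nonneg_left hsumL hD
    _ = 16 * D * Lu^4 * A^(2*η) * (k:ℝ) / (k:ℝ)^2 := by rw [hB]; ring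
    _ ≤ 16 * D * Lu^4 * A^(2*η) * ((n:ℝ)+k) / (k:ℝ)^2 := by
        gcongr
        linarith [Nat.cast_nonneg (α := ℝ) n]
end

section
/- If the process (X_k) satisfies Devroye inequality with constant D(1) (for Lipschitz functions, η = 1), then the Kantorovich distance between the empirical measure 𝓔_n = (1/n)∑_{j=1}^n δ_{X_j} and the common distribution μ of the X_k satisfies var(κ(𝓔_n, μ)) ≤ D(1)/n for all n ≥ 1. -/
open MeasureTheory ProbabilityTheory Finset

lemma abs_ciSup_sub_ciSup {ι : Type*} [Nonempty ι] (f h : ι → ℝ) (δ : ℝ) (hδ : 0 ≤ δ)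
    (h1 : ∀ i, f i ≤ h i + δ) (h2 : ∀ i, h i ≤ f i + δ) :
    |(⨆ i, f i) - ⨆ i, h i| ≤ δ := by
  by_cases hb : BddAbove (Set.range h)
  · obtain ⟨c, hc⟩ := hb
    have hbf : BddAbove (Set.range f) := ⟨c + δ, by
      rintro _ ⟨i, rfl⟩
      exact (h1 i).trans (add_le_add_left (hc ⟨i, rfl⟩) δ)⟩
    rw [abs_sub_le_iff]
    constructor
    · rw [sub_le_iff_le_add, add_comm]
      exact ciSup_le fun i => (h1 i).trans (by
        have := le_ciSup ⟨c, hc⟩ i; linarith)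
    · rw [sub_le_iff_le_add, add_comm]
      exact ciSup_le fun i => (h2 i).trans (by
        have := le_ciSup hbf i; linarith)
  · have hbf : ¬ BddAbove (Set.range f) := by
      intro ⟨c, hc⟩
      exact hb ⟨c + δ, by
        rintro _ ⟨i, rfl⟩
        exact (h2 i).trans (add_le_add_left (hc ⟨i, rfl⟩) δ)⟩
    rw [Real.iSup_of_not_bddAbove hb, Real.iSup_of_not_bddAbove hbf]
    simpa using hδ

lemma integral_emp {d n : ℕ} (x : Fin n → EuclideanSpace ℝ (Fin d))
    (g : EuclideanSpace ℝ (Fin d) → ℝ) (hg : Continuous g) :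
    ∫ t, g t ∂(((n : ENNReal))⁻¹ • ∑ i : Fin n, Measure.dirac (x i))
      = (n : ℝ)⁻¹ * ∑ i, g (x i) := by
  rw [integral_smul_measure, integral_finset_sum_measure]
  · simp [integral_dirac]
  · intro i _
    exact (integrable_const (g (x i))).congr (ae_eq_dirac g).symm

/-- Kantorovich distance: supremum over 1-Lipschitz test functions. -/
noncomputable def kantorovich {d : ℕ} (μ₁ μ₂ : Measure (EuclideanSpace ℝ (Fin d))) : ℝ :=
  ⨆ g : {g : EuclideanSpace ℝ (Fin d) → ℝ // LipschitzWith 1 g},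
    (∫ x, g.1 x ∂μ₁) - ∫ x, g.1 x ∂μ₂

/-- The empirical measure of the sample `x 1, …, x n`. -/
noncomputable def empiricalMeasure {d : ℕ} (n : ℕ) (x : ℕ → EuclideanSpace ℝ (Fin d)) :
    Measure (EuclideanSpace ℝ (Fin d)) :=
  ((n : ENNReal))⁻¹ • ∑ j ∈ Finset.Icc 1 n, Measure.dirac (x j)

theorem variance_kantorovich_empirical
    {Ω : Type*} [MeasurableSpace Ω] (P : Measure Ω) [IsProbabilityMeasure P]
    {d : ℕ} (X : ℕ → Ω → EuclideanSpace ℝ (Fin d)) (hmeas : ∀ k, Measurable (X k))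
    (μ : Measure (EuclideanSpace ℝ (Fin d))) (hμ : ∀ k, 1 ≤ k → Measure.map (X k) P = μ)
    (D : ℝ) (hD : 0 ≤ D)
    -- Devroye inequality for Lipschitz functions (η = 1):
    (hDev : ∀ (m : ℕ) (K : (Fin m → EuclideanSpace ℝ (Fin d)) → ℝ) (L : Fin m → ℝ),
      (∀ (j : Fin m) (x y : Fin m → EuclideanSpace ℝ (Fin d)),
          (∀ i, i ≠ j → x i = y i) → |K x - K y| ≤ L j * ‖x j - y j‖) →
      variance (fun ω => K (fun i => X ((i : ℕ) + 1) ω)) P ≤ D * ∑ j, (L j) ^ 2)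
    (n : ℕ) (hn : 1 ≤ n) :
    variance (fun ω => kantorovich (empiricalMeasure n (fun j => X j ω)) μ) P ≤ D / n := by
  have hn0 : (n : ℝ) ≠ 0 := Nat.cast_ne_zero.mpr (by omega)
  have hninv : (0:ℝ) ≤ (n : ℝ)⁻¹ := by positivity
  -- K as a supremum of explicit functions
  set K : (Fin n → EuclideanSpace ℝ (Fin d)) → ℝ := fun x =>
    ⨆ g : {g : EuclideanSpace ℝ (Fin d) → ℝ // LipschitzWith 1 g},
      ((n : ℝ)⁻¹ * ∑ i, g.1 (x i) - ∫ t, g.1 t ∂μ) with hK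
  have hfun : (fun ω => kantorovich (empiricalMeasure n (fun j => X j ω)) μ)
      = fun ω => K (fun i => X ((i : ℕ) + 1) ω) := by
    funext ω
    rw [hK, kantorovich, empiricalMeasure]
    congr 1
    funext g
    congr 1
    have hsum : ∑ j ∈ Finset.Icc 1 n, Measure.dirac (X j ω)
        = ∑ i : Fin n, Measure.dirac (X ((i : ℕ) + 1) ω) := by
      rw [Fin.sum_univ_eq_sum_range (fun i => Measure.dirac (X (i + 1) ω)) n,
        ← Finset.Ico_add_one_right_eq_Icc, Finset.sum_Ico_eq_sum_range]
      simp [add_comm]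
    rw [hsum]
    exact integral_emp _ _ (g.2.continuous)
  rw [hfun]
  have key := hDev n K (fun _ => (n : ℝ)⁻¹) ?_
  · refine key.trans ?_
    have : ∑ _j : Fin n, ((n : ℝ)⁻¹) ^ 2 = (n : ℝ)⁻¹ := by
      rw [Finset.sum_const]
      simp only [card_univ, Fintype.card_fin, nsmul_eq_mul]
      field_simp
    rw [this, div_eq_mul_inv]
  · intro j x y hxy
    haveI : Nonempty {g : EuclideanSpace ℝ (Fin d) → ℝ // LipschitzWith 1 g} :=
      ⟨⟨fun _ => 0, (LipschitzWith.const 0).weaken zero_le_one⟩⟩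
    rw [hK]
    refine abs_ciSup_sub_ciSup _ _ _ (by positivity) ?_ ?_ <;>
    · intro g
      have hg : |g.1 (x j) - g.1 (y j)| ≤ ‖x j - y j‖ := by
        have := g.2.dist_le_mul (x j) (y j)
        rwa [Real.dist_eq, NNReal.coe_one, one_mul, dist_eq_norm] at this
      have hsum : ∑ i, g.1 (x i) - ∑ i, g.1 (y i) = g.1 (x j) - g.1 (y j) := by
        rw [← Finset.sum_sub_distrib]
        rw [Finset.sum_eq_single j]
        · intro i _ hij
          rw [hxy i hij, sub_self]
        · intro h; exact absurd (Finset.mem_univ j) h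
      have habs := abs_le.mp hg
      have : (n : ℝ)⁻¹ * ∑ i, g.1 (x i) - (n : ℝ)⁻¹ * ∑ i, g.1 (y i)
          ≤ (n : ℝ)⁻¹ * ‖x j - y j‖ ∧
          (n : ℝ)⁻¹ * ∑ i, g.1 (y i) - (n : ℝ)⁻¹ * ∑ i, g.1 (x i)
          ≤ (n : ℝ)⁻¹ * ‖x j - y j‖ := by
        constructor <;>
        · rw [← mul_sub]
          first
          | (rw [hsum]; exact mul_le_mul_of_nonneg_left (abs_le.mp hg).2 hninv)
          | (rw [show ∑ i, g.1 (y i) - ∑ i, g.1 (x i) = -(g.1 (x j) - g.1 (y j)) by linarith [hsum]]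
             exact mul_le_mul_of_nonneg_left (by linarith [habs.1]) hninv)
      linarith [this.1, this.2]
end

section
/- (Kantorovich distance equals L¹ distance of distribution functions, Dall'Aglio.) For two probability measures μ₁, μ₂ on ℝ with finite first moments, sup over 1-Lipschitz g : ℝ → ℝ of ∫ g dμ₁ − ∫ g dμ₂ equals ∫_ℝ |F_{μ₁}(t) − F_{μ₂}(t)| dt, where F_{μᵢ}(t) = μᵢ((−∞, t]). -/
open MeasureTheory Set Filter Topology
open scoped ENNReal NNReal

noncomputable def psi (μ : Measure ℝ) (t : ℝ) : ℝ :=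
  if 0 < t then (μ (Set.Ici t)).toReal else -(μ (Set.Iio t)).toReal

lemma key_rep (μ : Measure ℝ) [IsProbabilityMeasure μ] (hμ : Integrable (fun x => |x|) μ)
    (s : ℝ → ℝ) (hs : Measurable s) (hb : ∀ᵐ t, |s t| ≤ 1) :
    Integrable (fun x => ∫ t in (0:ℝ)..x, s t) μ ∧
    Integrable (fun t => s t * psi μ t) volume ∧
    ∫ x, (∫ t in (0:ℝ)..x, s t) ∂μ = ∫ t, s t * psi μ t := by
  set A : Set (ℝ × ℝ) := {p | 0 < p.2 ∧ p.2 ≤ p.1} with hA_def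
  set B : Set (ℝ × ℝ) := {p | p.1 < p.2 ∧ p.2 ≤ 0} with hB_def
  have hA : MeasurableSet A :=
    (measurableSet_lt measurable_const measurable_snd).inter
      (measurableSet_le measurable_snd measurable_fst)
  have hB : MeasurableSet B :=
    (measurableSet_lt measurable_fst measurable_snd).inter
      (measurableSet_le measurable_snd measurable_const)
  set F : ℝ × ℝ → ℝ := fun p => A.indicator (fun q => s q.2) p - B.indicator (fun q => s q.2) p
    with hF_def
  have hsnd : Measurable fun p : ℝ × ℝ => s p.2 := hs.comp measurable_snd
  have hFmeas : Measurable F := ((hsnd.indicator hA).sub (hsnd.indicator hB))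
  -- finite measures of A and B
  have hmoment : ∫⁻ x, ENNReal.ofReal |x| ∂μ < ⊤ := by
    have := (hasFiniteIntegral_iff_ofReal (Eventually.of_forall fun x => abs_nonneg x)).1 hμ.2
    exact this
  have hAfin : (μ.prod volume) A ≠ ⊤ := by
    rw [Measure.prod_apply hA]
    have : ∀ x : ℝ, volume (Prod.mk x ⁻¹' A) = ENNReal.ofReal x := by
      intro x
      have : Prod.mk x ⁻¹' A = Set.Ioc 0 x := by ext t; simp [hA_def, and_comm]
      rw [this, Real.volume_Ioc, sub_zero]
    refine ne_of_lt (lt_of_le_of_lt (lintegral_mono fun x => ?_) hmoment)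
    rw [this x]; exact ENNReal.ofReal_le_ofReal (le_abs_self x)
  have hBfin : (μ.prod volume) B ≠ ⊤ := by
    rw [Measure.prod_apply hB]
    have h1 : ∀ x : ℝ, volume (Prod.mk x ⁻¹' B) = ENNReal.ofReal (-x) := by
      intro x
      have : Prod.mk x ⁻¹' B = Set.Ioc x 0 := by ext t; simp [hB_def, and_comm]
      rw [this, Real.volume_Ioc, zero_sub]
    refine ne_of_lt (lt_of_le_of_lt (lintegral_mono fun x => ?_) hmoment)
    rw [h1 x]; exact ENNReal.ofReal_le_ofReal (neg_le_abs x)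
  have hbp : ∀ᵐ p : ℝ × ℝ ∂(μ.prod volume), |s p.2| ≤ 1 :=
    Measure.quasiMeasurePreserving_snd.ae hb
  have hIA : Integrable (A.indicator fun q : ℝ × ℝ => s q.2) (μ.prod volume) := by
    refine Integrable.mono' (g := A.indicator fun _ => (1:ℝ))
      ((integrable_indicator_iff hA).2 (integrableOn_const hAfin))
      (hsnd.indicator hA).aestronglyMeasurable ?_
    · filter_upwards [hbp] with p hp
      rw [Set.indicator_apply, Set.indicator_apply]
      split_ifs
      · simpa using hp
      · simp
  have hIB : Integrable (B.indicator fun q : ℝ × ℝ => s q.2) (μ.prod volume) := by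
    refine Integrable.mono' (g := B.indicator fun _ => (1:ℝ))
      ((integrable_indicator_iff hB).2 (integrableOn_const hBfin))
      (hsnd.indicator hB).aestronglyMeasurable ?_
    · filter_upwards [hbp] with p hp
      rw [Set.indicator_apply, Set.indicator_apply]
      split_ifs
      · simpa using hp
      · simp
  have hF : Integrable F (μ.prod volume) := hIA.sub hIB
  have hIocInt : ∀ a b : ℝ, IntegrableOn s (Set.Ioc a b) volume := by
    intro a b
    refine Integrable.mono' (g := fun _ => (1:ℝ))
      (integrableOn_const measure_Ioc_lt_top.ne) hs.aestronglyMeasurable.restrict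
      (ae_restrict_of_ae (hb.mono fun t ht => by simpa using ht))
  have h1 : ∀ x : ℝ, (∫ t, F (x, t)) = ∫ t in (0:ℝ)..x, s t := by
    intro x
    have e1 : (fun t => F (x, t)) =
        fun t => (Set.Ioc (0:ℝ) x).indicator s t - (Set.Ioc x 0).indicator s t := by
      funext t
      simp only [hF_def, Set.indicator_apply, hA_def, hB_def, Set.mem_setOf_eq, Set.mem_Ioc]
    rw [e1, integral_sub ((integrable_indicator_iff measurableSet_Ioc).2 (hIocInt 0 x))
      ((integrable_indicator_iff measurableSet_Ioc).2 (hIocInt x 0)),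
      integral_indicator measurableSet_Ioc, integral_indicator measurableSet_Ioc]
    rcases le_total 0 x with hx | hx
    · rw [intervalIntegral.integral_of_le hx, Set.Ioc_eq_empty (not_lt.2 hx)]
      simp
    · rw [intervalIntegral.integral_symm, intervalIntegral.integral_of_le hx,
        Set.Ioc_eq_empty (not_lt.2 hx)]
      simp
  have h2 : ∀ t : ℝ, (∫ x, F (x, t) ∂μ) = s t * psi μ t := by
    intro t
    by_cases ht : 0 < t
    · have eA : (fun x => F (x, t)) = (Set.Ici t).indicator (fun _ => s t) := by
        funext x
        simp only [hF_def, Set.indicator_apply, hA_def, hB_def, Set.mem_setOf_eq, Set.mem_Ici,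
          ht, true_and, (not_le.2 ht : ¬ t ≤ 0), and_false, if_false, sub_zero]
      rw [eA, integral_indicator_const _ measurableSet_Ici, psi, if_pos ht, smul_eq_mul, mul_comm]
      simp only [Measure.real]
    · have eB : (fun x => F (x, t)) = fun x => -((Set.Iio t).indicator (fun _ => s t) x) := by
        funext x
        simp only [hF_def, Set.indicator_apply, hA_def, hB_def, Set.mem_setOf_eq, Set.mem_Iio,
          ht, false_and, if_false, zero_sub, (not_lt.1 ht : t ≤ 0), and_true]
      rw [eB, integral_neg, integral_indicator_const _ measurableSet_Iio, psi, if_neg ht,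
        smul_eq_mul]
      simp only [Measure.real]
      ring
  refine ⟨(hF.integral_prod_left).congr (Eventually.of_forall fun x => h1 x), 
    (hF.integral_prod_right).congr (Eventually.of_forall fun t => h2 t), ?_⟩
  calc ∫ x, (∫ t in (0:ℝ)..x, s t) ∂μ 
      = ∫ x, (∫ t, F (x, t)) ∂μ :=
        integral_congr_ae (Eventually.of_forall fun x => (h1 x).symm)
    _ = ∫ t, (∫ x, F (x, t) ∂μ) := integral_integral_swap (f := fun x t => F (x, t)) hF
    _ = ∫ t, s t * psi μ t := integral_congr_ae (Eventually.of_forall fun t => h2 t)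

lemma stid : StieltjesFunction.id.measure = volume := by
  refine Measure.ext_of_Ioc _ _ fun a b h => ?_
  rw [StieltjesFunction.measure_Ioc, Real.volume_Ioc]; rfl

lemma lip_deriv_bound {u : ℝ → ℝ} (hu : LipschitzWith 2 u) {x D : ℝ}
    (hD : HasDerivAt u D x) : |D| ≤ 2 := by
  rw [hasDerivAt_iff_tendsto_slope] at hD
  have h2 : Tendsto (fun y => |slope u x y|) (𝓝[≠] x) (𝓝 |D|) :=
    (continuous_abs.continuousAt).tendsto.comp hD
  refine le_of_tendsto h2 ?_
  filter_upwards [self_mem_nhdsWithin] with y hy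
  have hyx : y ≠ x := hy
  rw [slope_def_field, abs_div, div_le_iff₀ (abs_pos.2 (sub_ne_zero.2 hyx))]
  have := hu.dist_le_mul y x
  simp only [Real.dist_eq, NNReal.coe_ofNat] at this
  linarith [this]


lemma lip_exists_s {g : ℝ → ℝ} (hg : LipschitzWith 1 g) :
    ∃ s : ℝ → ℝ, Measurable s ∧ (∀ᵐ t, |s t| ≤ 1) ∧
      ∀ x, g x = g 0 + ∫ t in (0:ℝ)..x, s t := by
  have hgc : Continuous g := hg.continuous
  have humono : Monotone fun x => x + g x := by
    intro a b hab
    show a + g a ≤ b + g b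
    have := hg.dist_le_mul a b
    simp only [NNReal.coe_one, one_mul, Real.dist_eq] at this
    have := abs_le.1 this
    have h1 : |a - b| = b - a := by rw [abs_sub_comm, abs_of_nonneg (by linarith)]
    rw [h1] at this
    linarith [this.1]
  have hvmono : Monotone fun x => x - g x := by
    intro a b hab
    show a - g a ≤ b - g b
    have := hg.dist_le_mul a b
    simp only [NNReal.coe_one, one_mul, Real.dist_eq] at this
    have := abs_le.1 this
    have h1 : |a - b| = b - a := by rw [abs_sub_comm, abs_of_nonneg (by linarith)]
    rw [h1] at this
    linarith [this.2]
  set U : StieltjesFunction ℝ :=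
    ⟨fun x => x + g x, humono, fun x => ((continuous_id.add hgc).continuousAt).continuousWithinAt⟩
    with hU_def
  set V : StieltjesFunction ℝ :=
    ⟨fun x => x - g x, hvmono, fun x => ((continuous_id.sub hgc).continuousAt).continuousWithinAt⟩
    with hV_def
  have hUV : U + V = (2:ℝ≥0) • StieltjesFunction.id := by
    ext x
    show (x + g x) + (x - g x) = ((2:ℝ≥0) : ℝ) * x
    push_cast; ring
  have hsum : U.measure + V.measure = (2:ℝ≥0) • (volume : Measure ℝ) := by
    rw [← StieltjesFunction.measure_add, hUV, StieltjesFunction.measure_smul, stid]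
  have hle : U.measure ≤ (2:ℝ≥0) • (volume : Measure ℝ) := by
    rw [← hsum]; exact Measure.le_add_right le_rfl
  have hac : U.measure ≪ volume :=
    Measure.absolutelyContinuous_of_le_smul (c := ((2:ℝ≥0) : ℝ≥0∞))
      (by simpa [ENNReal.smul_def] using hle)
  set d : ℝ → ℝ≥0∞ := U.measure.rnDeriv volume with hd_def
  have hdmeas : Measurable d := Measure.measurable_rnDeriv _ _
  have hwd : volume.withDensity d = U.measure := Measure.withDensity_rnDeriv_eq _ _ hac
  have hdlt : ∀ᵐ t, d t < ⊤ := Measure.rnDeriv_lt_top _ _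
  have hIocEq : ∀ a b : ℝ, ∫⁻ t in Set.Ioc a b, d t = U.measure (Set.Ioc a b) := by
    intro a b; rw [← hwd, withDensity_apply _ measurableSet_Ioc]
  have hIocfin : ∀ a b : ℝ, ∫⁻ t in Set.Ioc a b, d t ≠ ⊤ := by
    intro a b
    rw [hIocEq, U.measure_Ioc]; exact ENNReal.ofReal_ne_top
  have hdint : ∀ a b : ℝ, IntegrableOn (fun t => (d t).toReal) (Set.Ioc a b) volume := fun a b =>
    integrable_toReal_of_lintegral_ne_top hdmeas.aemeasurable.restrict (hIocfin a b)
  have hftc : ∀ a b : ℝ, a ≤ b →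
      ∫ t in Set.Ioc a b, (d t).toReal = (b + g b) - (a + g a) := by
    intro a b hab
    have hnn : (0:ℝ) ≤ U b - U a := by
      have := humono hab
      show (0:ℝ) ≤ (b + g b) - (a + g a)
      simp only at this
      linarith [this]
    rw [integral_toReal hdmeas.aemeasurable.restrict (ae_restrict_of_ae hdlt), hIocEq,
      U.measure_Ioc, ENNReal.toReal_ofReal hnn]
  have hulip : LipschitzWith 2 (fun x => x + g x) := by
    have := LipschitzWith.add (LipschitzWith.id (α := ℝ)) hg
    norm_num at this ⊢
    exact this
  have hDb : ∀ᵐ t, (d t).toReal ≤ 2 := by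
    filter_upwards [U.ae_hasDerivAt] with t ht
    have h2 : |(d t).toReal| ≤ 2 := lip_deriv_bound hulip ht
    exact (abs_le.1 h2).2
  refine ⟨fun t => (d t).toReal - 1, (hdmeas.ennreal_toReal).sub measurable_const, ?_, ?_⟩
  · filter_upwards [hDb] with t ht
    rw [abs_le]
    constructor <;> [skip; skip] <;> linarith [ENNReal.toReal_nonneg (a := d t)]
  · intro x
    have hii : IntervalIntegrable (fun t => (d t).toReal) volume 0 x := by
      rw [intervalIntegrable_iff]
      exact hdint _ _
    have hsub : ∫ t in (0:ℝ)..x, ((d t).toReal - 1) =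
        (∫ t in (0:ℝ)..x, (d t).toReal) - ∫ t in (0:ℝ)..x, (1:ℝ) :=
      intervalIntegral.integral_sub hii intervalIntegrable_const
    have hone : ∫ t in (0:ℝ)..x, (1:ℝ) = x := by simp
    rcases le_total 0 x with hx | hx
    · rw [hsub, hone, intervalIntegral.integral_of_le hx, hftc 0 x hx]; ring
    · rw [hsub, hone, intervalIntegral.integral_symm,
        intervalIntegral.integral_of_le hx, hftc x 0 hx]; ring


lemma psi_diff (μ₁ μ₂ : Measure ℝ) [IsProbabilityMeasure μ₁] [IsProbabilityMeasure μ₂] (t : ℝ) :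
    psi μ₁ t - psi μ₂ t = (μ₂ (Set.Iio t)).toReal - (μ₁ (Set.Iio t)).toReal := by
  have key : ∀ μ : Measure ℝ, IsProbabilityMeasure μ →
      (μ (Set.Ici t)).toReal = 1 - (μ (Set.Iio t)).toReal := by
    intro μ hμ
    have hc : μ (Set.Ici t) = 1 - μ (Set.Iio t) := by
      rw [← Set.compl_Iio, measure_compl measurableSet_Iio (measure_ne_top μ _), measure_univ]
    rw [hc, ENNReal.toReal_sub_of_le prob_le_one ENNReal.one_ne_top, ENNReal.toReal_one]
  unfold psi
  split_ifs with h
  · rw [key μ₁ ‹_›, key μ₂ ‹_›]; ring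
  · ring

lemma ae_Iio_eq_Iic (μ : Measure ℝ) [IsFiniteMeasure μ] :
    ∀ᵐ t, (μ (Set.Iio t)).toReal = (μ (Set.Iic t)).toReal := by
  have hc : Set.Countable {t : ℝ | 0 < μ {t}} :=
    MeasureTheory.Measure.countable_meas_pos_of_disjoint_iUnion
      (fun t => measurableSet_singleton t)
      (fun a b hab => by
        simp only [Function.onFun]
        exact Set.disjoint_singleton.2 hab)
  rw [ae_iff]
  refine measure_mono_null ?_ (hc.measure_zero volume)
  intro t ht
  simp only [Set.mem_setOf_eq] at ht ⊢
  by_contra hcon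
  simp only [not_lt, le_zero_iff] at hcon
  apply ht
  have : μ (Set.Iic t) = μ (Set.Iio t) := by
    refine le_antisymm ?_ (measure_mono Set.Iio_subset_Iic_self)
    calc μ (Set.Iic t) ≤ μ (Set.Iio t ∪ {t}) :=
        measure_mono fun x hx => (Set.mem_union x _ _).2
          (((Set.mem_Iic.1 hx).lt_or_eq).imp Set.mem_Iio.2 Set.mem_singleton_iff.2)
      _ ≤ μ (Set.Iio t) + μ {t} := measure_union_le _ _
      _ = μ (Set.Iio t) := by rw [hcon, add_zero]
  rw [this]

lemma lip_of_integral {s : ℝ → ℝ} (hs : Measurable s) (hb : ∀ t, |s t| ≤ 1) :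
    LipschitzWith 1 (fun x => ∫ t in (0:ℝ)..x, s t) := by
  have hint : ∀ a b : ℝ, IntervalIntegrable s volume a b := by
    intro a b
    rw [intervalIntegrable_iff]
    exact Integrable.mono' (g := fun _ => (1:ℝ))
      (integrableOn_const measure_Ioc_lt_top.ne) hs.aestronglyMeasurable.restrict
      (ae_restrict_of_ae (Eventually.of_forall fun t => by simpa using hb t))
  refine LipschitzWith.of_dist_le_mul fun x y => ?_
  rw [Real.dist_eq, NNReal.coe_one, one_mul, Real.dist_eq]
  have hdiff : (∫ t in (0:ℝ)..x, s t) - ∫ t in (0:ℝ)..y, s t = ∫ t in y..x, s t :=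
    intervalIntegral.integral_interval_sub_left (hint 0 x) (hint 0 y)
  rw [hdiff, ← Real.norm_eq_abs]
  refine le_trans (intervalIntegral.norm_integral_le_of_norm_le_const (C := 1) fun t _ => ?_) ?_
  · rw [Real.norm_eq_abs]; exact hb t
  · rw [one_mul]

/-- Dall'Aglio's theorem: the Kantorovich distance equals the `L¹` distance
of the distribution functions. -/
theorem kantorovich_eq_integral_abs_cdf_sub
    (μ₁ μ₂ : Measure ℝ) [IsProbabilityMeasure μ₁] [IsProbabilityMeasure μ₂]
    (h₁ : Integrable (fun x => |x|) μ₁) (h₂ : Integrable (fun x => |x|) μ₂) :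
    (⨆ g : {g : ℝ → ℝ // LipschitzWith 1 g}, (∫ x, g.1 x ∂μ₁) - ∫ x, g.1 x ∂μ₂) =
      ∫ t, |(μ₁ (Set.Iic t)).toReal - (μ₂ (Set.Iic t)).toReal| := by
  classical
  set D : ℝ → ℝ := fun t => (μ₂ (Set.Iio t)).toReal - (μ₁ (Set.Iio t)).toReal with hD_def
  obtain ⟨-, hpsi1, -⟩ := key_rep μ₁ h₁ (fun _ => 1) measurable_const
    (Eventually.of_forall fun t => by norm_num)
  obtain ⟨-, hpsi2, -⟩ := key_rep μ₂ h₂ (fun _ => 1) measurable_const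
    (Eventually.of_forall fun t => by norm_num)
  have hpsi1' : Integrable (psi μ₁) volume :=
    hpsi1.congr (Eventually.of_forall fun t => one_mul _)
  have hpsi2' : Integrable (psi μ₂) volume :=
    hpsi2.congr (Eventually.of_forall fun t => one_mul _)
  have hDint : Integrable D volume :=
    (hpsi1'.sub hpsi2').congr (Eventually.of_forall fun t => psi_diff μ₁ μ₂ t)
  have hDabs : Integrable (fun t => |D t|) volume := hDint.abs
  have hval : ∀ s : ℝ → ℝ, Measurable s → (∀ᵐ t, |s t| ≤ 1) →
      ((∫ x, (∫ t in (0:ℝ)..x, s t) ∂μ₁) - ∫ x, (∫ t in (0:ℝ)..x, s t) ∂μ₂)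
        = ∫ t, s t * D t ∧ Integrable (fun x => ∫ t in (0:ℝ)..x, s t) μ₁ ∧
          Integrable (fun x => ∫ t in (0:ℝ)..x, s t) μ₂ ∧
          Integrable (fun t => s t * D t) volume := by
    intro s hs hb
    obtain ⟨hi1, hs1, he1⟩ := key_rep μ₁ h₁ s hs hb
    obtain ⟨hi2, hs2, he2⟩ := key_rep μ₂ h₂ s hs hb
    have hptws : ∀ t, s t * psi μ₁ t - s t * psi μ₂ t = s t * D t := by
      intro t
      rw [← mul_sub, psi_diff μ₁ μ₂ t]
    refine ⟨?_, hi1, hi2, (hs1.sub hs2).congr (Eventually.of_forall hptws)⟩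
    rw [he1, he2, ← integral_sub hs1 hs2]
    exact integral_congr_ae (Eventually.of_forall hptws)
  set I : ℝ := ∫ t, |D t| with hI_def
  have hupper : ∀ G : {g : ℝ → ℝ // LipschitzWith 1 g},
      (∫ x, G.1 x ∂μ₁) - ∫ x, G.1 x ∂μ₂ ≤ I := by
    rintro ⟨g, hg⟩
    obtain ⟨s, hs, hb, hrep⟩ := lip_exists_s hg
    obtain ⟨hveq, hi1, hi2, hsD⟩ := hval s hs hb
    have hg1 : ∫ x, g x ∂μ₁ = g 0 + ∫ x, (∫ t in (0:ℝ)..x, s t) ∂μ₁ := by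
      calc ∫ x, g x ∂μ₁ = ∫ x, (g 0 + ∫ t in (0:ℝ)..x, s t) ∂μ₁ :=
            integral_congr_ae (Eventually.of_forall fun x => hrep x)
        _ = g 0 + ∫ x, (∫ t in (0:ℝ)..x, s t) ∂μ₁ := by
            rw [integral_add (integrable_const _) hi1, integral_const, probReal_univ]
            simp
    have hg2 : ∫ x, g x ∂μ₂ = g 0 + ∫ x, (∫ t in (0:ℝ)..x, s t) ∂μ₂ := by
      calc ∫ x, g x ∂μ₂ = ∫ x, (g 0 + ∫ t in (0:ℝ)..x, s t) ∂μ₂ :=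
            integral_congr_ae (Eventually.of_forall fun x => hrep x)
        _ = g 0 + ∫ x, (∫ t in (0:ℝ)..x, s t) ∂μ₂ := by
            rw [integral_add (integrable_const _) hi2, integral_const, probReal_univ]
            simp
    have heq : (∫ x, g x ∂μ₁) - ∫ x, g x ∂μ₂ = ∫ t, s t * D t := by
      rw [hg1, hg2]
      rw [← hveq]; ring
    rw [heq, hI_def]
    refine integral_mono_ae hsD hDabs ?_
    filter_upwards [hb] with t ht
    calc s t * D t ≤ |s t * D t| := le_abs_self _
      _ = |s t| * |D t| := abs_mul _ _
      _ ≤ 1 * |D t| := by gcongr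
      _ = |D t| := one_mul _
  have hDmeas : Measurable D := by
    have key : ∀ μ : Measure ℝ, Measurable fun t : ℝ => (μ (Set.Iio t)).toReal := by
      intro μ
      refine Measurable.ennreal_toReal (Monotone.measurable ?_)
      intro a b hab
      exact measure_mono (Set.Iio_subset_Iio hab)
    exact (key μ₂).sub (key μ₁)
  set s₀ : ℝ → ℝ := fun t => if 0 ≤ D t then 1 else -1 with hs0_def
  have hs₀ : Measurable s₀ :=
    Measurable.ite (measurableSet_le measurable_const hDmeas) measurable_const measurable_const
  have hb₀ : ∀ t, |s₀ t| ≤ 1 := by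
    intro t
    rw [hs0_def]
    simp only
    split_ifs <;> simp
  set g₀ : ℝ → ℝ := fun x => ∫ t in (0:ℝ)..x, s₀ t with hg0_def
  have hg₀ : LipschitzWith 1 g₀ := lip_of_integral hs₀ hb₀
  obtain ⟨hveq₀, -, -, -⟩ := hval s₀ hs₀ (Eventually.of_forall hb₀)
  have hopt : (∫ x, g₀ x ∂μ₁) - ∫ x, g₀ x ∂μ₂ = I := by
    rw [hg0_def]
    rw [hveq₀, hI_def]
    refine integral_congr_ae (Eventually.of_forall fun t => ?_)
    rw [hs0_def]
    simp only
    split_ifs with h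
    · rw [one_mul, abs_of_nonneg h]
    · rw [neg_one_mul, abs_of_neg (not_le.1 h)]
  haveI : Nonempty {g : ℝ → ℝ // LipschitzWith 1 g} :=
    ⟨⟨fun _ => 0, (LipschitzWith.const (b := (0:ℝ))).weaken zero_le_one⟩⟩
  have hbdd : BddAbove (Set.range fun G : {g : ℝ → ℝ // LipschitzWith 1 g} =>
      (∫ x, G.1 x ∂μ₁) - ∫ x, G.1 x ∂μ₂) := by
    refine ⟨I, ?_⟩
    rintro _ ⟨G, rfl⟩
    exact hupper G
  have hsup : (⨆ g : {g : ℝ → ℝ // LipschitzWith 1 g},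
      (∫ x, g.1 x ∂μ₁) - ∫ x, g.1 x ∂μ₂) = I := by
    refine le_antisymm (ciSup_le hupper) ?_
    rw [← hopt]
    exact le_ciSup hbdd (⟨g₀, hg₀⟩ : {g : ℝ → ℝ // LipschitzWith 1 g})
  rw [hsup, hI_def]
  refine integral_congr_ae ?_
  filter_upwards [ae_Iio_eq_Iic μ₁, ae_Iio_eq_Iic μ₂] with t h1t h2t
  rw [hD_def]
  simp only
  rw [h1t, h2t, abs_sub_comm]
end

section
/- (Uniform decay of correlations via uniform boundedness.) Let (Ω, μ, f) be a measure-preserving system, 𝓑₁, 𝓑₂ Banach spaces of measurable functions on Ω such that: constants belong to 𝓑₁; ψ ↦ ∫ψ dμ is continuous on 𝓑₁; the Koopman operator U ψ = ψ∘f is bounded on 𝓑₁; and 𝓑₂ embeds continuously in the dual of 𝓑₁ (via the pairing (ψ₁,ψ₂) ↦ ∫ψ₁ψ₂ dμ). Suppose (γ_n) is a nonincreasing sequence such that for every ψ₁ ∈ 𝓑₁ and ψ₂ ∈ 𝓑₂ there is a constant C_{ψ₁,ψ₂} with |∫ (ψ₁∘fⁿ) ψ₂ dμ − ∫ψ₁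 dμ ∫ψ₂ dμ| ≤ C_{ψ₁,ψ₂} γ_n for all n. Then there exists K such that |∫ (ψ₁∘fⁿ) ψ₂ dμ − ∫ψ₁ dμ ∫ψ₂ dμ| ≤ K ‖ψ₁‖_{𝓑₁} ‖ψ₂‖_{𝓑₂} γ_n for all n, ψ₁, ψ₂. -/
/-!
Both sides of the estimate are values of the continuous bilinear forms
`T n (ψ₁, ψ₂) = ⟪U ⁿ ψ₁, ψ₂⟫ - (∫ ψ₁) ⟪1, ψ₂⟫` on `B₁ × B₂`. For the `n` with `γ n ≠ 0` the
rescaled forms `(γ n)⁻¹ • T n` are pointwise bounded, so two applications of the uniform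
boundedness principle (first for fixed `ψ₂`, then to the flipped forms) bound them uniformly in
norm; for `γ n = 0` the pointwise hypothesis already gives the estimate.
-/

open MeasureTheory

theorem apply_iterate_eq_comp_iterate {α β γ : Type*} {f : α → α} {j : β → α → γ} {U : β → β}
    (hU : ∀ ψ, j (U ψ) = j ψ ∘ f) (n : ℕ) (ψ : β) : j (U^[n] ψ) = j ψ ∘ f^[n] := by
  induction n with
  | zero => rfl
  | succ n ih =>
    rw [Function.iterate_succ_apply', hU, ih, Function.iterate_succ]
    rfl

namespace ContinuousLinearMap

theorem banach_steinhaus₂ {𝕜 E F G ι : Type*} [NontriviallyNormedField 𝕜]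
    [NormedAddCommGroup E] [NormedSpace 𝕜 E] [NormedAddCommGroup F] [NormedSpace 𝕜 F]
    [NormedAddCommGroup G] [NormedSpace 𝕜 G] [CompleteSpace E] [CompleteSpace F]
    {T : ι → E →L[𝕜] F →L[𝕜] G} (h : ∀ x y, ∃ C, ∀ i, ‖T i x y‖ ≤ C) :
    ∃ K, ∀ i, ‖T i‖ ≤ K := by
  have hflip : ∀ y, ∃ C, ∀ i, ‖(T i).flip y‖ ≤ C := fun y => banach_steinhaus (h · y)
  simpa only [opNorm_flip] using banach_steinhaus hflip

theorem exists_uniform_rate_of_pointwise_rate {𝕜 E F G ι : Type*} [RCLike 𝕜]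
    [NormedAddCommGroup E] [NormedSpace 𝕜 E] [NormedAddCommGroup F] [NormedSpace 𝕜 F]
    [NormedAddCommGroup G] [NormedSpace 𝕜 G] [CompleteSpace E] [CompleteSpace F]
    {T : ι → E →L[𝕜] F →L[𝕜] G} {γ : ι → ℝ}
    (hγ : ∀ i, 0 ≤ γ i) (h : ∀ x y, ∃ C, ∀ i, ‖T i x y‖ ≤ C * γ i) :
    ∃ K, ∀ i x y, ‖T i x y‖ ≤ K * ‖x‖ * ‖y‖ * γ i := by
  let S : {i // γ i ≠ 0} → E →L[𝕜] F →L[𝕜] G := fun i => ((γ i)⁻¹ : 𝕜) • T i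
  have norm_S : ∀ i x y, ‖S i x y‖ = (γ i)⁻¹ * ‖T i x y‖ := fun i x y => by
    simp [S, norm_smul, abs_of_nonneg (hγ i)]
  obtain ⟨K, hK⟩ := banach_steinhaus₂ (T := S) fun x y => by
    obtain ⟨C, hC⟩ := h x y
    refine ⟨C, fun i => ?_⟩
    rw [norm_S, inv_mul_le_iff₀ ((hγ i).lt_of_ne' i.2), mul_comm]
    exact hC i
  refine ⟨K, fun i x y => ?_⟩
  rcases eq_or_ne (γ i) 0 with hi | hi
  · obtain ⟨C, hC⟩ := h x y
    simpa [hi] using hC i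
  · calc ‖T i x y‖ = γ i * ‖S ⟨i, hi⟩ x y‖ := by rw [norm_S, mul_inv_cancel_left₀ hi]
      _ ≤ γ i * (‖S ⟨i, hi⟩‖ * ‖x‖ * ‖y‖) :=
          mul_le_mul_of_nonneg_left (le_opNorm₂ _ x y) (hγ i)
      _ ≤ γ i * (K * ‖x‖ * ‖y‖) := mul_le_mul_of_nonneg_left (by gcongr; exact hK _) (hγ i)
      _ = K * ‖x‖ * ‖y‖ * γ i := mul_comm _ _

end ContinuousLinearMap

section Correlation

variable {Ω B₁ B₂ : Type*} [MeasurableSpace Ω] (μ : Measure Ω)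
  [NormedAddCommGroup B₁] [NormedSpace ℝ B₁] [NormedAddCommGroup B₂] [NormedSpace ℝ B₂]

theorem exists_continuousBilinear_integral_mul (j₁ : B₁ →ₗ[ℝ] Ω → ℝ) (j₂ : B₂ →ₗ[ℝ] Ω → ℝ)
    (hdual : ∃ c : ℝ, ∀ (ψ₁ : B₁) (ψ₂ : B₂),
      Integrable (fun x => j₁ ψ₁ x * j₂ ψ₂ x) μ ∧
      |∫ x, j₁ ψ₁ x * j₂ ψ₂ x ∂μ| ≤ c * ‖ψ₁‖ * ‖ψ₂‖) :
    ∃ P : B₁ →L[ℝ] B₂ →L[ℝ] ℝ, ∀ ψ₁ ψ₂, P ψ₁ ψ₂ = ∫ x, j₁ ψ₁ x * j₂ ψ₂ x ∂μ := by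
  obtain ⟨c, hc⟩ := hdual
  let b : B₁ →ₗ[ℝ] B₂ →ₗ[ℝ] ℝ := LinearMap.mk₂ ℝ (fun ψ₁ ψ₂ => ∫ x, j₁ ψ₁ x * j₂ ψ₂ x ∂μ)
    (fun ψ ψ' φ => by
      simp only [map_add, Pi.add_apply, add_mul]; exact integral_add (hc ψ φ).1 (hc ψ' φ).1)
    (fun r ψ φ => by
      simp only [map_smul, Pi.smul_apply, smul_eq_mul, mul_assoc]; exact integral_const_mul r _)
    (fun ψ φ φ' => by
      simp only [map_add, Pi.add_apply, mul_add]; exact integral_add (hc ψ φ).1 (hc ψ φ').1)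
    (fun r ψ φ => by
      simp only [map_smul, Pi.smul_apply, smul_eq_mul, mul_left_comm _ r]
      exact integral_const_mul r _)
  exact ⟨b.mkContinuous₂ c fun ψ₁ ψ₂ => (hc ψ₁ ψ₂).2, fun _ _ => rfl⟩

noncomputable def correlation (f : Ω → Ω) (φ ψ : Ω → ℝ) (n : ℕ) : ℝ :=
  (∫ x, φ (f^[n] x) * ψ x ∂μ) - (∫ x, φ x ∂μ) * ∫ x, ψ x ∂μ

theorem exists_correlation_operator (f : Ω → Ω) (j₁ : B₁ →ₗ[ℝ] Ω → ℝ) (j₂ : B₂ →ₗ[ℝ] Ω → ℝ)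
    {one : B₁} (hone : j₁ one = fun _ => 1)
    {I : B₁ →L[ℝ] ℝ} (hI : ∀ ψ, I ψ = ∫ x, j₁ ψ x ∂μ)
    {U : B₁ →L[ℝ] B₁} (hU : ∀ ψ, j₁ (U ψ) = j₁ ψ ∘ f)
    {P : B₁ →L[ℝ] B₂ →L[ℝ] ℝ} (hP : ∀ ψ₁ ψ₂, P ψ₁ ψ₂ = ∫ x, j₁ ψ₁ x * j₂ ψ₂ x ∂μ) :
    ∃ T : ℕ → B₁ →L[ℝ] B₂ →L[ℝ] ℝ,
      ∀ n ψ₁ ψ₂, T n ψ₁ ψ₂ = correlation μ f (j₁ ψ₁) (j₂ ψ₂) n := by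
  refine ⟨fun n => P.comp (U ^ n) - I.smulRight (P one), fun n ψ₁ ψ₂ => ?_⟩
  simp [correlation, hP, hI, hone, apply_iterate_eq_comp_iterate hU n ψ₁]

end Correlation

theorem uniform_decay_of_correlations_general
    {Ω : Type*} [MeasurableSpace Ω] (μ : Measure Ω)
    (f : Ω → Ω)
    {B₁ B₂ : Type*}
    [NormedAddCommGroup B₁] [NormedSpace ℝ B₁] [CompleteSpace B₁]
    [NormedAddCommGroup B₂] [NormedSpace ℝ B₂] [CompleteSpace B₂]
    -- `B₁`, `B₂` are spaces of measurable functions on `Ω`, via linear inclusions: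
    (j₁ : B₁ →ₗ[ℝ] (Ω → ℝ)) (j₂ : B₂ →ₗ[ℝ] (Ω → ℝ))
    -- (i) the constant functions belong to `B₁`
    (hconst : ∃ one : B₁, j₁ one = fun _ => 1)
    -- (ii) integration against `μ` is a continuous linear functional on `B₁`
    (hint : ∃ I : B₁ →L[ℝ] ℝ, ∀ ψ, I ψ = ∫ x, j₁ ψ x ∂μ)
    -- (iii) the Koopman operator is a bounded operator on `B₁`
    (hkoop : ∃ U : B₁ →L[ℝ] B₁, ∀ ψ, j₁ (U ψ) = (j₁ ψ) ∘ f)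
    -- (iv) `B₂` embeds continuously into the dual of `B₁` via the pairing
    (hdual : ∃ c : ℝ, ∀ (ψ₁ : B₁) (ψ₂ : B₂),
      Integrable (fun x => j₁ ψ₁ x * j₂ ψ₂ x) μ ∧
      |∫ x, j₁ ψ₁ x * j₂ ψ₂ x ∂μ| ≤ c * ‖ψ₁‖ * ‖ψ₂‖)
    (γ : ℕ → ℝ) (hγpos : ∀ n, 0 ≤ γ n)
    -- decay of correlations with a pair-dependent constant:
    (hdecay : ∀ (ψ₁ : B₁) (ψ₂ : B₂), ∃ C : ℝ, ∀ n : ℕ,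
      |(∫ x, j₁ ψ₁ (f^[n] x) * j₂ ψ₂ x ∂μ) -
        (∫ x, j₁ ψ₁ x ∂μ) * ∫ x, j₂ ψ₂ x ∂μ| ≤ C * γ n) :
    ∃ K : ℝ, ∀ (n : ℕ) (ψ₁ : B₁) (ψ₂ : B₂),
      |(∫ x, j₁ ψ₁ (f^[n] x) * j₂ ψ₂ x ∂μ) -
        (∫ x, j₁ ψ₁ x ∂μ) * ∫ x, j₂ ψ₂ x ∂μ| ≤ K * ‖ψ₁‖ * ‖ψ₂‖ * γ n := by
  obtain ⟨one, hone⟩ := hconst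
  obtain ⟨I, hI⟩ := hint
  obtain ⟨U, hU⟩ := hkoop
  obtain ⟨P, hP⟩ := exists_continuousBilinear_integral_mul μ j₁ j₂ hdual
  obtain ⟨T, hT⟩ := exists_correlation_operator μ f j₁ j₂ hone hI hU hP
  have norm_T : ∀ n ψ₁ ψ₂, ‖T n ψ₁ ψ₂‖ = |correlation μ f (j₁ ψ₁) (j₂ ψ₂) n| := by
    simp [hT, Real.norm_eq_abs]
  obtain ⟨K, hK⟩ := ContinuousLinearMap.exists_uniform_rate_of_pointwise_rate (T := T) hγpos
    fun ψ₁ ψ₂ => by simpa only [norm_T, correlation] using hdecay ψ₁ ψ₂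
  exact ⟨K, fun n ψ₁ ψ₂ => norm_T n ψ₁ ψ₂ ▸ hK n ψ₁ ψ₂⟩

theorem uniform_decay_of_correlations
    {Ω : Type*} [MeasurableSpace Ω] (μ : Measure Ω) [IsProbabilityMeasure μ]
    (f : Ω → Ω) (hf : MeasurePreserving f μ μ)
    {B₁ B₂ : Type*}
    [NormedAddCommGroup B₁] [NormedSpace ℝ B₁] [CompleteSpace B₁]
    [NormedAddCommGroup B₂] [NormedSpace ℝ B₂] [CompleteSpace B₂]
    -- `B₁`, `B₂` are spaces of measurable functions on `Ω`, via linear inclusions: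
    (j₁ : B₁ →ₗ[ℝ] (Ω → ℝ)) (j₂ : B₂ →ₗ[ℝ] (Ω → ℝ))
    -- (i) the constant functions belong to `B₁`
    (hconst : ∃ one : B₁, j₁ one = fun _ => 1)
    -- (ii) integration against `μ` is a continuous linear functional on `B₁`
    (hint : ∃ I : B₁ →L[ℝ] ℝ, ∀ ψ, I ψ = ∫ x, j₁ ψ x ∂μ)
    -- (iii) the Koopman operator is a bounded operator on `B₁`
    (hkoop : ∃ U : B₁ →L[ℝ] B₁, ∀ ψ, j₁ (U ψ) = (j₁ ψ) ∘ f)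
    -- (iv) `B₂` embeds continuously into the dual of `B₁` via the pairing
    (hdual : ∃ c : ℝ, ∀ (ψ₁ : B₁) (ψ₂ : B₂),
      Integrable (fun x => j₁ ψ₁ x * j₂ ψ₂ x) μ ∧
      |∫ x, j₁ ψ₁ x * j₂ ψ₂ x ∂μ| ≤ c * ‖ψ₁‖ * ‖ψ₂‖)
    (γ : ℕ → ℝ) (hγpos : ∀ n, 0 ≤ γ n) (hγ : Antitone γ)
    -- decay of correlations with a pair-dependent constant:
    (hdecay : ∀ (ψ₁ : B₁) (ψ₂ : B₂), ∃ C : ℝ, ∀ n : ℕ,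
      |(∫ x, j₁ ψ₁ (f^[n] x) * j₂ ψ₂ x ∂μ) -
        (∫ x, j₁ ψ₁ x ∂μ) * ∫ x, j₂ ψ₂ x ∂μ| ≤ C * γ n) :
    ∃ K : ℝ, ∀ (n : ℕ) (ψ₁ : B₁) (ψ₂ : B₂),
      |(∫ x, j₁ ψ₁ (f^[n] x) * j₂ ψ₂ x ∂μ) -
        (∫ x, j₁ ψ₁ x ∂μ) * ∫ x, j₂ ψ₂ x ∂μ| ≤ K * ‖ψ₁‖ * ‖ψ₂‖ * γ n :=
  uniform_decay_of_correlations_general μ f j₁ j₂ hconst hint hkoop hdual γ hγpos hdecay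
end

section
/- Suppose (X_k) satisfies Devroye inequality with constant D for η-Hölder functions and Lipschitz kernel ψ with compact support, ∫ψ = 1, ψ ≥ 0. Define K(x₁,…,xₙ) = ∫ |(1/(n α_n)) ∑_{j=1}^n ψ((s − x_j)/α_n) − Φ(s)| ds for a fixed integrable Φ. Then K is separately η-Hölder with constants L_j ≤ C/(n α_n^η) for a constant C depending only on ψ and η, and consequently var(K(X₁,…,X_n)) ≤ C' D /(n α_n^{2η}). -/
open MeasureTheory ProbabilityTheory Finset Real

lemma aux_min_le {u v η : ℝ} (hu : 0 ≤ u) (hv : 0 ≤ v) (hη : 0 < η) (hη1 : η ≤ 1) :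
    min u v ≤ u ^ η * v ^ (1 - η) := by
  rcases eq_or_lt_of_le hu with h | hu'
  · rw [← h, Real.zero_rpow hη.ne', zero_mul]
    simpa [← h] using hv
  rcases eq_or_lt_of_le hv with h | hv'
  · rw [← h, min_eq_right hu]
    positivity
  have hmin : 0 < min u v := lt_min hu' hv'
  calc min u v = (min u v) ^ η * (min u v) ^ (1 - η) := by
        rw [← Real.rpow_add hmin, add_sub_cancel, Real.rpow_one]
    _ ≤ u ^ η * v ^ (1 - η) :=
        mul_le_mul (Real.rpow_le_rpow hmin.le (min_le_left u v) hη.le)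
          (Real.rpow_le_rpow hmin.le (min_le_right u v) (by linarith))
          (Real.rpow_nonneg hmin.le _) (Real.rpow_nonneg hu _)

lemma aux_trans (ψ : ℝ → ℝ) (Lψ : NNReal) (hψlip : LipschitzWith Lψ ψ)
    (hψsupp : HasCompactSupport ψ) (hψpos : ∀ s, 0 ≤ ψ s) (hψint : ∫ s, ψ s = 1)
    (h : ℝ) :
    ∫ u, |ψ (u - h) - ψ u| ≤
      min ((Lψ : ℝ) * |h| * (2 * (volume (tsupport ψ)).toReal)) 2 := by
  have hcont : Continuous ψ := hψlip.continuous
  have hint : Integrable ψ := hcont.integrable_of_hasCompactSupport hψsupp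
  have hint1 : Integrable (fun u => ψ (u - h)) := hint.comp_sub_right h
  have hintd : Integrable (fun u => |ψ (u - h) - ψ u|) := (hint1.sub hint).abs
  refine le_min ?_ ?_
  · set S := tsupport ψ with hS
    have hSm : MeasurableSet S := (isClosed_tsupport ψ).measurableSet
    set T : Set ℝ := (fun u => u - h) ⁻¹' S ∪ S with hT
    have hTm : MeasurableSet T := (hSm.preimage (measurable_id.sub_const h)).union hSm
    have hvolS : volume S < ⊤ := hψsupp.measure_lt_top
    have hvolT : volume T ≤ 2 * volume S := by
      refine (measure_union_le _ _).trans ?_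
      have : volume ((fun u => u - h) ⁻¹' S) = volume S := by
        simpa [sub_eq_add_neg] using measure_preimage_add_right volume (-h) S
      rw [this, two_mul]
    have hbound : ∀ u, |ψ (u - h) - ψ u| ≤ T.indicator (fun _ => (Lψ : ℝ) * |h|) u := by
      intro u
      by_cases hu : u ∈ T
      · rw [Set.indicator_of_mem hu]
        have := hψlip.dist_le_mul (u - h) u
        rw [Real.dist_eq, Real.dist_eq] at this
        simpa [abs_sub_comm] using this
      · rw [Set.indicator_of_notMem hu]
        have h1 : ψ (u - h) = 0 :=
          image_eq_zero_of_notMem_tsupport (fun hc => hu (Set.mem_union_left _ hc))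
        have h2 : ψ u = 0 :=
          image_eq_zero_of_notMem_tsupport (fun hc => hu (Set.mem_union_right _ hc))
        simp [h1, h2]
    have hTfin : volume T < ⊤ := hvolT.trans_lt (by finiteness)
    calc ∫ u, |ψ (u - h) - ψ u| ≤ ∫ u, T.indicator (fun _ => (Lψ : ℝ) * |h|) u :=
          integral_mono hintd ((integrable_indicator_iff hTm).2
            (integrableOn_const hTfin.ne)) hbound
      _ = (volume T).toReal * ((Lψ : ℝ) * |h|) := by
          rw [integral_indicator hTm, setIntegral_const, smul_eq_mul]; rfl
      _ ≤ (Lψ : ℝ) * |h| * (2 * (volume S).toReal) := by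
          have h2 : (volume T).toReal ≤ (2 * volume S).toReal :=
            ENNReal.toReal_mono (by finiteness) hvolT
          rw [ENNReal.toReal_mul] at h2
          simp only [ENNReal.toReal_ofNat] at h2
          rw [mul_comm]
          exact mul_le_mul_of_nonneg_left h2 (by positivity)
  · calc ∫ u, |ψ (u - h) - ψ u| ≤ ∫ u, (ψ (u - h) + ψ u) := by
          refine integral_mono hintd (hint1.add hint) fun u => ?_
          exact (abs_sub _ _).trans (by rw [abs_of_nonneg (hψpos _), abs_of_nonneg (hψpos _)])
      _ = 2 := by
          rw [integral_add hint1 hint, integral_sub_right_eq_self ψ h, hψint]; norm_num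

lemma aux_trans2 (ψ : ℝ → ℝ) (Lψ : NNReal) (hψlip : LipschitzWith Lψ ψ)
    (hψsupp : HasCompactSupport ψ) (hψpos : ∀ s, 0 ≤ ψ s) (hψint : ∫ s, ψ s = 1)
    {η : ℝ} (hη : 0 < η) (hη1 : η ≤ 1) (h : ℝ) :
    ∫ u, |ψ (u - h) - ψ u| ≤
      ((Lψ : ℝ) * (2 * (volume (tsupport ψ)).toReal)) ^ η * 2 ^ (1 - η) * |h| ^ η := by
  refine (aux_trans ψ Lψ hψlip hψsupp hψpos hψint h).trans ?_
  have hc : (0:ℝ) ≤ (Lψ : ℝ) * (2 * (volume (tsupport ψ)).toReal) := by positivity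
  calc min ((Lψ : ℝ) * |h| * (2 * (volume (tsupport ψ)).toReal)) 2
      ≤ ((Lψ : ℝ) * |h| * (2 * (volume (tsupport ψ)).toReal)) ^ η * 2 ^ (1 - η) :=
        aux_min_le (by positivity) (by norm_num) hη hη1
    _ = ((Lψ : ℝ) * (2 * (volume (tsupport ψ)).toReal)) ^ η * 2 ^ (1 - η) * |h| ^ η := by
        rw [show (Lψ : ℝ) * |h| * (2 * (volume (tsupport ψ)).toReal)
            = ((Lψ : ℝ) * (2 * (volume (tsupport ψ)).toReal)) * |h| by ring,
          Real.mul_rpow hc (abs_nonneg h)]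
        ring

lemma aux_scale (ψ : ℝ → ℝ) {α : ℝ} (hα : 0 < α) (a b : ℝ) :
    ∫ s, |ψ ((s - a) / α) - ψ ((s - b) / α)| =
      α * ∫ u, |ψ (u - (a - b) / α) - ψ u| := by
  set g : ℝ → ℝ := fun u => |ψ (u - (a - b) / α) - ψ u| with hg
  have key : ∀ s : ℝ, |ψ ((s - a) / α) - ψ ((s - b) / α)| = g ((s - b) / α) := by
    intro s
    have : (s - b) / α - (a - b) / α = (s - a) / α := by
      rw [div_sub_div_same]; ring_nf
    simp only [hg, this]
  calc ∫ s, |ψ ((s - a) / α) - ψ ((s - b) / α)| = ∫ s, g ((s - b) / α) := by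
        simp only [key]
    _ = ∫ s, (fun t => g (t / α)) (s - b) := by simp
    _ = ∫ t, g (t / α) := integral_sub_right_eq_self (fun t => g (t / α)) b
    _ = |α| • ∫ u, g u := MeasureTheory.Measure.integral_comp_div g α
    _ = α * ∫ u, g u := by rw [abs_of_pos hα, smul_eq_mul]

lemma aux_holder (ψ : ℝ → ℝ) (Lψ : NNReal) (hψlip : LipschitzWith Lψ ψ)
    (hψsupp : HasCompactSupport ψ) (hψpos : ∀ s, 0 ≤ ψ s) (hψint : ∫ s, ψ s = 1)
    {η : ℝ} (hη : 0 < η) (hη1 : η ≤ 1)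
    (n : ℕ) (hn : 1 ≤ n) (α : ℝ) (hα : 0 < α) (Φ : ℝ → ℝ) (hΦ : Integrable Φ volume)
    (j : Fin n) (x y : Fin n → ℝ) (hxy : ∀ i, i ≠ j → x i = y i) :
    |(∫ s, |(1 / ((n : ℝ) * α)) * ∑ i : Fin n, ψ ((s - x i) / α) - Φ s|) -
      (∫ s, |(1 / ((n : ℝ) * α)) * ∑ i : Fin n, ψ ((s - y i) / α) - Φ s|)| ≤
    (((Lψ : ℝ) * (2 * (volume (tsupport ψ)).toReal)) ^ η * 2 ^ (1 - η)) / ((n : ℝ) * α ^ η)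
      * |x j - y j| ^ η := by
  have hn0 : (0:ℝ) < (n:ℝ) := by exact_mod_cast hn
  have hcont : Continuous ψ := hψlip.continuous
  have hint : Integrable ψ := hcont.integrable_of_hasCompactSupport hψsupp
  have hψc : ∀ c : ℝ, Integrable (fun s => ψ ((s - c) / α)) :=
    fun c => (hint.comp_div hα.ne').comp_sub_right c
  set c0 : ℝ := 1 / ((n : ℝ) * α) with hc0
  have hc0pos : 0 < c0 := by positivity
  set C0 : ℝ := ((Lψ : ℝ) * (2 * (volume (tsupport ψ)).toReal)) ^ η * 2 ^ (1 - η) with hC0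
  have hC0nn : 0 ≤ C0 := by positivity
  have hA : Integrable (fun s => c0 * ∑ i : Fin n, ψ ((s - x i) / α)) :=
    (integrable_finset_sum univ fun i _ => hψc (x i)).const_mul c0
  have hB : Integrable (fun s => c0 * ∑ i : Fin n, ψ ((s - y i) / α)) :=
    (integrable_finset_sum univ fun i _ => hψc (y i)).const_mul c0
  have hF : Integrable (fun s => |c0 * ∑ i : Fin n, ψ ((s - x i) / α) - Φ s|) := (hA.sub hΦ).abs
  have hG : Integrable (fun s => |c0 * ∑ i : Fin n, ψ ((s - y i) / α) - Φ s|) := (hB.sub hΦ).abs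
  have hdiff : Integrable (fun s => c0 * |ψ ((s - x j) / α) - ψ ((s - y j) / α)|) :=
    (((hψc (x j)).sub (hψc (y j))).abs).const_mul c0
  have step1 : |(∫ s, |c0 * ∑ i : Fin n, ψ ((s - x i) / α) - Φ s|) -
      (∫ s, |c0 * ∑ i : Fin n, ψ ((s - y i) / α) - Φ s|)| ≤
      ∫ s, c0 * |ψ ((s - x j) / α) - ψ ((s - y j) / α)| := by
    rw [← integral_sub hF hG, ← Real.norm_eq_abs]
    refine (norm_integral_le_integral_norm _).trans ?_
    refine integral_mono (hF.sub hG).norm hdiff fun s => ?_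
    have hsum : (∑ i : Fin n, ψ ((s - x i) / α)) - (∑ i : Fin n, ψ ((s - y i) / α))
        = ψ ((s - x j) / α) - ψ ((s - y j) / α) := by
      rw [← Finset.sum_sub_distrib]
      refine Finset.sum_eq_single_of_mem j (mem_univ j) fun i _ hij => ?_
      rw [hxy i hij]; ring
    have habs : |(c0 * ∑ i : Fin n, ψ ((s - x i) / α) - Φ s)
        - (c0 * ∑ i : Fin n, ψ ((s - y i) / α) - Φ s)|
        = c0 * |ψ ((s - x j) / α) - ψ ((s - y j) / α)| := by
      rw [show (c0 * ∑ i : Fin n, ψ ((s - x i) / α) - Φ s)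
          - (c0 * ∑ i : Fin n, ψ ((s - y i) / α) - Φ s)
          = c0 * ((∑ i : Fin n, ψ ((s - x i) / α)) - (∑ i : Fin n, ψ ((s - y i) / α))) by ring,
        hsum, abs_mul, abs_of_pos hc0pos]
    calc ‖|c0 * ∑ i : Fin n, ψ ((s - x i) / α) - Φ s| -
          |c0 * ∑ i : Fin n, ψ ((s - y i) / α) - Φ s|‖
        ≤ |(c0 * ∑ i : Fin n, ψ ((s - x i) / α) - Φ s)
          - (c0 * ∑ i : Fin n, ψ ((s - y i) / α) - Φ s)| := by
          rw [Real.norm_eq_abs]; exact abs_abs_sub_abs_le_abs_sub _ _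
      _ = c0 * |ψ ((s - x j) / α) - ψ ((s - y j) / α)| := habs
  have step2 : ∫ s, c0 * |ψ ((s - x j) / α) - ψ ((s - y j) / α)|
      = c0 * (α * ∫ u, |ψ (u - (x j - y j) / α) - ψ u|) := by
    rw [integral_const_mul, aux_scale ψ hα (x j) (y j)]
  have step3 : ∫ u, |ψ (u - (x j - y j) / α) - ψ u| ≤ C0 * (|x j - y j| ^ η / α ^ η) := by
    refine (aux_trans2 ψ Lψ hψlip hψsupp hψpos hψint hη hη1 _).trans ?_
    rw [abs_div, abs_of_pos hα, Real.div_rpow (abs_nonneg _) hα.le]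
  have hαη : (0:ℝ) < α ^ η := Real.rpow_pos_of_pos hα η
  calc |(∫ s, |c0 * ∑ i : Fin n, ψ ((s - x i) / α) - Φ s|) -
        (∫ s, |c0 * ∑ i : Fin n, ψ ((s - y i) / α) - Φ s|)|
      ≤ ∫ s, c0 * |ψ ((s - x j) / α) - ψ ((s - y j) / α)| := step1
    _ = c0 * (α * ∫ u, |ψ (u - (x j - y j) / α) - ψ u|) := step2
    _ ≤ c0 * (α * (C0 * (|x j - y j| ^ η / α ^ η))) := by
        refine mul_le_mul_of_nonneg_left (mul_le_mul_of_nonneg_left step3 hα.le) hc0pos.le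
    _ = C0 / ((n : ℝ) * α ^ η) * |x j - y j| ^ η := by
        rw [hc0]; field_simp

theorem kernel_density_estimator_holder_and_variance
    {Ω : Type*} [MeasurableSpace Ω] (P : Measure Ω) [IsProbabilityMeasure P]
    (X : ℕ → Ω → ℝ) (hmeas : ∀ k, Measurable (X k))
    (η : ℝ) (hη : 0 < η) (hη1 : η ≤ 1)
    (D : ℝ) (hD : 0 ≤ D)
    -- Devroye inequality for η-Hölder functions:
    (hDev : ∀ (m : ℕ) (K : (Fin m → ℝ) → ℝ) (L : Fin m → ℝ),
      (∀ (j : Fin m) (x y : Fin m → ℝ),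
          (∀ i, i ≠ j → x i = y i) → |K x - K y| ≤ L j * |x j - y j| ^ η) →
      variance (fun ω => K (fun i => X ((i : ℕ) + 1) ω)) P ≤ D * ∑ j, (L j) ^ 2)
    (ψ : ℝ → ℝ) (Lψ : NNReal) (hψlip : LipschitzWith Lψ ψ)
    (hψsupp : HasCompactSupport ψ) (hψpos : ∀ s, 0 ≤ ψ s) (hψint : ∫ s, ψ s = 1) :
    ∃ C > 0, ∃ C' > 0, ∀ n : ℕ, 1 ≤ n → ∀ α : ℝ, 0 < α →
      ∀ Φ : ℝ → ℝ, Integrable Φ volume →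
        (∀ (j : Fin n) (x y : Fin n → ℝ), (∀ i, i ≠ j → x i = y i) →
          |(∫ s, |(1 / ((n : ℝ) * α)) * ∑ i : Fin n, ψ ((s - x i) / α) - Φ s|) -
            (∫ s, |(1 / ((n : ℝ) * α)) * ∑ i : Fin n, ψ ((s - y i) / α) - Φ s|)| ≤
          C / ((n : ℝ) * α ^ η) * |x j - y j| ^ η) ∧
        variance (fun ω =>
            ∫ s, |(1 / ((n : ℝ) * α)) * ∑ i : Fin n, ψ ((s - X ((i : ℕ) + 1) ω) / α) - Φ s|)
          P ≤ C' * D / ((n : ℝ) * α ^ (2 * η)) := by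
  set C0 : ℝ := ((Lψ : ℝ) * (2 * (volume (tsupport ψ)).toReal)) ^ η * 2 ^ (1 - η) with hC0
  have hC0nn : 0 ≤ C0 := by positivity
  refine ⟨C0 + 1, by positivity, (C0 + 1) ^ 2, by positivity, fun n hn α hα Φ hΦ => ?_⟩
  have hn0 : (0:ℝ) < (n:ℝ) := by exact_mod_cast hn
  have hαη : (0:ℝ) < α ^ η := Real.rpow_pos_of_pos hα η
  have hHol : ∀ (j : Fin n) (x y : Fin n → ℝ), (∀ i, i ≠ j → x i = y i) →
      |(∫ s, |(1 / ((n : ℝ) * α)) * ∑ i : Fin n, ψ ((s - x i) / α) - Φ s|) -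
        (∫ s, |(1 / ((n : ℝ) * α)) * ∑ i : Fin n, ψ ((s - y i) / α) - Φ s|)| ≤
      (C0 + 1) / ((n : ℝ) * α ^ η) * |x j - y j| ^ η := by
    intro j x y hxy
    refine (aux_holder ψ Lψ hψlip hψsupp hψpos hψint hη hη1 n hn α hα Φ hΦ j x y hxy).trans ?_
    have hd : (0:ℝ) ≤ |x j - y j| ^ η := Real.rpow_nonneg (abs_nonneg _) η
    have hden : (0:ℝ) < (n:ℝ) * α ^ η := by positivity
    refine mul_le_mul_of_nonneg_right ?_ hd
    gcongr
    linarith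
  refine ⟨hHol, ?_⟩
  have hvar := hDev n
    (fun x => ∫ s, |(1 / ((n : ℝ) * α)) * ∑ i : Fin n, ψ ((s - x i) / α) - Φ s|)
    (fun _ => (C0 + 1) / ((n : ℝ) * α ^ η)) hHol
  refine hvar.trans (le_of_eq ?_)
  have hα2 : α ^ (2 * η) = (α ^ η) ^ 2 := by
    rw [mul_comm, Real.rpow_mul hα.le, show ((2:ℝ)) = ((2:ℕ):ℝ) by norm_num, Real.rpow_natCast]
  rw [Finset.sum_const, card_univ, Fintype.card_fin, nsmul_eq_mul, hα2]
  field_simp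
end

section
/- In the almost-sure CLT setup: the function K_n(x₁,…,xₙ) = sup_{g ∈ 𝓛₀} (1/D_n) ∑_{j=1}^n (1/j)[g(S_j(x)/√j) − 𝒩(0,σ²)(g)], where S_j(x) = u(x₁)+⋯+u(x_j), D_n = ∑_{k=1}^n 1/k, u is Lipschitz with constant L, and 𝓛₀ is the set of 1-Lipschitz g : ℝ → ℝ with g(0)=0, is separately Lipschitz in each variable x_q with Lipschitz constant at most (L/D_n) ∑_{j=q}^n 1/j^{3/2} ≤ C L/(√q D_n). -/
open MeasureTheory ProbabilityTheory Finset

lemma rpow_neg_threehalf (j : ℕ) (hj : 1 ≤ j) :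
    (j : ℝ) ^ (-(3 : ℝ) / 2) = 1 / ((j : ℝ) * Real.sqrt j) := by
  have hj0 : (0 : ℝ) < j := by exact_mod_cast hj
  rw [show (-(3:ℝ)/2) = -(1 + 1/2 : ℝ) by ring, Real.rpow_neg hj0.le, Real.rpow_add hj0,
    Real.rpow_one, ← Real.sqrt_eq_rpow, one_div]

lemma key_single (j : ℕ) (hj : 1 ≤ j) :
    (j : ℝ) ^ (-(3 : ℝ) / 2) ≤ 6 / Real.sqrt j - 6 / Real.sqrt (j + 1) := by
  have hj0 : (0 : ℝ) < j := by exact_mod_cast hj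
  have ha : (0:ℝ) < Real.sqrt j := Real.sqrt_pos.2 hj0
  have hb : (0:ℝ) < Real.sqrt (j+1) := Real.sqrt_pos.2 (by linarith)
  have ha1 : (1:ℝ) ≤ Real.sqrt j := by
    rw [show (1:ℝ) = Real.sqrt 1 by simp]
    exact Real.sqrt_le_sqrt (by exact_mod_cast hj)
  have ha2 : Real.sqrt j ^ 2 = (j:ℝ) := Real.sq_sqrt hj0.le
  have hb2 : Real.sqrt (j+1) ^ 2 = (j:ℝ) + 1 := Real.sq_sqrt (by linarith)
  set a := Real.sqrt j
  set b := Real.sqrt (j+1)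
  have hba : b ≤ 2 * a := by nlinarith
  rw [rpow_neg_threehalf j hj, div_sub_div _ _ ha.ne' hb.ne', div_le_div_iff₀ (by positivity) (by positivity)]
  nlinarith [mul_pos ha hb, sq_nonneg (a - b), mul_pos (mul_pos ha ha) hb]

lemma tail_aux (m : ℕ) (hm : 1 ≤ m) : ∀ k : ℕ,
    ∑ j ∈ Icc m (m + k), (j : ℝ) ^ (-(3 : ℝ) / 2) ≤ 6 / Real.sqrt m - 6 / Real.sqrt (m + k + 1) := by
  intro k
  induction k with
  | zero => simpa using key_single m hm
  | succ k ih =>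
    rw [show m + (k+1) = (m+k) + 1 by ring, Finset.sum_Icc_succ_top (by omega)]
    have h2 := key_single (m + k + 1) (by omega)
    push_cast at h2 ⊢
    rw [show ((m:ℝ) + (↑k + 1) + 1) = (↑m + ↑k + 1 + 1) by ring]
    linarith

lemma tail_bound (m n : ℕ) (hm : 1 ≤ m) :
    ∑ j ∈ Icc m n, (j : ℝ) ^ (-(3 : ℝ) / 2) ≤ 6 / Real.sqrt m := by
  have hs : (0:ℝ) < Real.sqrt m := Real.sqrt_pos.2 (by exact_mod_cast hm)
  rcases le_or_gt m n with h | h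
  · obtain ⟨k, rfl⟩ := Nat.exists_eq_add_of_le h
    have := tail_aux m hm k
    have h2 : (0:ℝ) ≤ 6 / Real.sqrt ((m:ℝ) + k + 1) := by positivity
    linarith
  · rw [Finset.Icc_eq_empty (by omega), Finset.sum_empty]
    positivity

lemma abs_ciSup_sub_ciSup_le {ι : Type*} [Nonempty ι] (F G : ι → ℝ) (M : ℝ) (hM : 0 ≤ M)
    (h : ∀ g, |F g - G g| ≤ M) : |(⨆ g, F g) - ⨆ g, G g| ≤ M := by
  by_cases hF : BddAbove (Set.range F)
  · have hG : BddAbove (Set.range G) := by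
      obtain ⟨b, hb⟩ := hF
      refine ⟨b + M, ?_⟩
      rintro _ ⟨g, rfl⟩
      have h1 := hb (Set.mem_range_self g)
      have h2 := abs_le.1 (h g)
      linarith [h2.1]
    rw [abs_sub_le_iff]
    constructor
    · have hle : ∀ g, F g ≤ (⨆ g, G g) + M := fun g => by
        have h1 := le_ciSup hG g
        have h2 := abs_le.1 (h g)
        linarith [h2.2]
      linarith [ciSup_le hle]
    · have hle : ∀ g, G g ≤ (⨆ g, F g) + M := fun g => by
        have h1 := le_ciSup hF g
        have h2 := abs_le.1 (h g)
        linarith [h2.1]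
      linarith [ciSup_le hle]
  · have hG : ¬ BddAbove (Set.range G) := by
      intro hG
      apply hF
      obtain ⟨b, hb⟩ := hG
      refine ⟨b + M, ?_⟩
      rintro _ ⟨g, rfl⟩
      have h1 := hb (Set.mem_range_self g)
      have h2 := abs_le.1 (h g)
      linarith [h2.2]
    rw [Real.iSup_of_not_bddAbove hF, Real.iSup_of_not_bddAbove hG]
    simpa using hM


lemma sum_sub_step (D : ℝ) (s : Finset ℕ) (f h : ℕ → ℝ) (I : ℝ) :
    (1/D) * (∑ j ∈ s, (1/(j:ℝ)) * (f j - I)) - (1/D) * (∑ j ∈ s, (1/(j:ℝ)) * (h j - I))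
      = (1/D) * ∑ j ∈ s, (1/(j:ℝ)) * (f j - h j) := by
  rw [← mul_sub, ← Finset.sum_sub_distrib]
  congr 1
  exact Finset.sum_congr rfl fun j _ => by ring

theorem asclt_functional_separately_lipschitz
    {d : ℕ} (u : EuclideanSpace ℝ (Fin d) → ℝ) (L : NNReal) (hL : LipschitzWith L u)
    (v : NNReal) (hv : v ≠ 0) :
    ∃ C > 0, ∀ n : ℕ, 1 ≤ n → ∀ q : Fin n,
      ∀ x y : Fin n → EuclideanSpace ℝ (Fin d), (∀ i, i ≠ q → x i = y i) →
        |(⨆ g : {g : ℝ → ℝ // LipschitzWith 1 g ∧ g 0 = 0},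
            (1 / ∑ k ∈ Finset.Icc 1 n, (1 / (k : ℝ))) *
              ∑ j ∈ Finset.Icc 1 n, (1 / (j : ℝ)) *
                (g.1 ((∑ l ∈ Finset.univ.filter (fun l : Fin n => (l : ℕ) < j), u (x l)) / Real.sqrt j) -
                  ∫ t, g.1 t ∂(gaussianReal 0 v))) -
          (⨆ g : {g : ℝ → ℝ // LipschitzWith 1 g ∧ g 0 = 0},
            (1 / ∑ k ∈ Finset.Icc 1 n, (1 / (k : ℝ))) *
              ∑ j ∈ Finset.Icc 1 n, (1 / (j : ℝ)) *
                (g.1 ((∑ l ∈ Finset.univ.filter (fun l : Fin n => (l : ℕ) < j), u (y l)) / Real.sqrt j) -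
                  ∫ t, g.1 t ∂(gaussianReal 0 v)))| ≤
          ((L : ℝ) / ∑ k ∈ Finset.Icc 1 n, (1 / (k : ℝ))) *
              (∑ j ∈ Finset.Icc ((q : ℕ) + 1) n, (j : ℝ) ^ (-(3 : ℝ) / 2)) *
            ‖x q - y q‖ ∧
        ((L : ℝ) / ∑ k ∈ Finset.Icc 1 n, (1 / (k : ℝ))) *
            (∑ j ∈ Finset.Icc ((q : ℕ) + 1) n, (j : ℝ) ^ (-(3 : ℝ) / 2)) ≤
          C * (L : ℝ) /
            (Real.sqrt ((q : ℕ) + 1) * ∑ k ∈ Finset.Icc 1 n, (1 / (k : ℝ))) := by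
  refine ⟨6, by norm_num, ?_⟩
  intro n hn q x y hxy
  haveI : Nonempty {g : ℝ → ℝ // LipschitzWith 1 g ∧ g 0 = 0} := ⟨⟨id, LipschitzWith.id, rfl⟩⟩
  set D : ℝ := ∑ k ∈ Finset.Icc 1 n, (1 / (k : ℝ)) with hD
  have hD1 : (1:ℝ) ≤ D := by
    have h1 : (1:ℕ) ∈ Finset.Icc 1 n := by simp [hn]
    have h2 := Finset.single_le_sum (f := fun k : ℕ => 1/(k:ℝ)) (fun i _ => by positivity) h1
    rw [hD]
    refine le_trans (le_of_eq ?_) h2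
    norm_num
  have hD0 : (0:ℝ) < D := by linarith
  set T : ℝ := ∑ j ∈ Finset.Icc ((q : ℕ) + 1) n, (j : ℝ) ^ (-(3 : ℝ) / 2) with hT
  have hT0 : 0 ≤ T := Finset.sum_nonneg fun j _ => Real.rpow_nonneg (by positivity) _
  constructor
  · -- Lipschitz estimate
    set M : ℝ := (L : ℝ) / D * T * ‖x q - y q‖ with hM
    have hM0 : 0 ≤ M := by positivity
    refine abs_ciSup_sub_ciSup_le _ _ M hM0 ?_
    intro g
    rw [sum_sub_step]
    have hterm : ∀ j ∈ Finset.Icc 1 n,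
        |(1/(j:ℝ)) * (g.1 ((∑ l ∈ Finset.univ.filter (fun l : Fin n => (l : ℕ) < j), u (x l)) / Real.sqrt j)
          - g.1 ((∑ l ∈ Finset.univ.filter (fun l : Fin n => (l : ℕ) < j), u (y l)) / Real.sqrt j))|
        ≤ (if (q:ℕ) < j then (L:ℝ) * ‖x q - y q‖ * (j:ℝ)^(-(3:ℝ)/2) else 0) := by
      intro j hj
      obtain ⟨hj1, hjn⟩ := Finset.mem_Icc.1 hj
      have hjR : (0:ℝ) < j := by exact_mod_cast hj1
      have hsj : (0:ℝ) < Real.sqrt j := Real.sqrt_pos.2 hjR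
      by_cases hqj : (q:ℕ) < j
      · rw [if_pos hqj]
        have hqmem : q ∈ Finset.univ.filter (fun l : Fin n => (l : ℕ) < j) := by
          simp [hqj]
        have hsum : (∑ l ∈ Finset.univ.filter (fun l : Fin n => (l : ℕ) < j), u (x l))
            - (∑ l ∈ Finset.univ.filter (fun l : Fin n => (l : ℕ) < j), u (y l))
            = u (x q) - u (y q) := by
          rw [← Finset.sum_sub_distrib]
          refine Finset.sum_eq_single_of_mem q hqmem ?_
          intro l _ hlq
          rw [hxy l hlq, sub_self]
        have hg : |g.1 ((∑ l ∈ Finset.univ.filter (fun l : Fin n => (l : ℕ) < j), u (x l)) / Real.sqrt j)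
            - g.1 ((∑ l ∈ Finset.univ.filter (fun l : Fin n => (l : ℕ) < j), u (y l)) / Real.sqrt j)|
            ≤ |u (x q) - u (y q)| / Real.sqrt j := by
          have h1 := g.2.1.dist_le_mul
            ((∑ l ∈ Finset.univ.filter (fun l : Fin n => (l : ℕ) < j), u (x l)) / Real.sqrt j)
            ((∑ l ∈ Finset.univ.filter (fun l : Fin n => (l : ℕ) < j), u (y l)) / Real.sqrt j)
          rw [Real.dist_eq, Real.dist_eq, NNReal.coe_one, one_mul, div_sub_div_same, abs_div,
            abs_of_nonneg (Real.sqrt_nonneg _), hsum] at h1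
          exact h1
        have hu : |u (x q) - u (y q)| ≤ (L:ℝ) * ‖x q - y q‖ := by
          have h2 := hL.dist_le_mul (x q) (y q)
          rwa [Real.dist_eq, dist_eq_norm] at h2
        rw [abs_mul, abs_of_nonneg (by positivity : (0:ℝ) ≤ 1/(j:ℝ)),
          rpow_neg_threehalf j hj1]
        calc (1/(j:ℝ)) * |g.1 _ - g.1 _|
            ≤ (1/(j:ℝ)) * (((L:ℝ) * ‖x q - y q‖) / Real.sqrt j) := by
              refine mul_le_mul_of_nonneg_left (hg.trans ?_) (by positivity)
              gcongr
          _ = (L:ℝ) * ‖x q - y q‖ * (1 / ((j:ℝ) * Real.sqrt j)) := by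
              field_simp
      · rw [if_neg hqj]
        have hsx : (∑ l ∈ Finset.univ.filter (fun l : Fin n => (l : ℕ) < j), u (x l))
            = ∑ l ∈ Finset.univ.filter (fun l : Fin n => (l : ℕ) < j), u (y l) := by
          refine Finset.sum_congr rfl fun l hl => ?_
          have hl' : (l : ℕ) < j := by simpa using (Finset.mem_filter.1 hl).2
          have hlq : l ≠ q := by
            intro h; subst h; omega
          rw [hxy l hlq]
        rw [hsx, sub_self, mul_zero, abs_zero]
    have hfilter : (Finset.Icc 1 n).filter (fun j => (q:ℕ) < j) = Finset.Icc ((q:ℕ)+1) n := by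
      ext j
      simp only [Finset.mem_filter, Finset.mem_Icc]
      omega
    calc |(1/D) * ∑ j ∈ Finset.Icc 1 n, (1/(j:ℝ)) *
            (g.1 ((∑ l ∈ Finset.univ.filter (fun l : Fin n => (l : ℕ) < j), u (x l)) / Real.sqrt j)
              - g.1 ((∑ l ∈ Finset.univ.filter (fun l : Fin n => (l : ℕ) < j), u (y l)) / Real.sqrt j))|
        = (1/D) * |∑ j ∈ Finset.Icc 1 n, (1/(j:ℝ)) *
            (g.1 ((∑ l ∈ Finset.univ.filter (fun l : Fin n => (l : ℕ) < j), u (x l)) / Real.sqrt j)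
              - g.1 ((∑ l ∈ Finset.univ.filter (fun l : Fin n => (l : ℕ) < j), u (y l)) / Real.sqrt j))| := by
          rw [abs_mul, abs_of_nonneg (by positivity : (0:ℝ) ≤ 1/D)]
      _ ≤ (1/D) * ∑ j ∈ Finset.Icc 1 n, |(1/(j:ℝ)) *
            (g.1 ((∑ l ∈ Finset.univ.filter (fun l : Fin n => (l : ℕ) < j), u (x l)) / Real.sqrt j)
              - g.1 ((∑ l ∈ Finset.univ.filter (fun l : Fin n => (l : ℕ) < j), u (y l)) / Real.sqrt j))| := by
          exact mul_le_mul_of_nonneg_left (Finset.abs_sum_le_sum_abs _ _) (by positivity)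
      _ ≤ (1/D) * ∑ j ∈ Finset.Icc 1 n,
            (if (q:ℕ) < j then (L:ℝ) * ‖x q - y q‖ * (j:ℝ)^(-(3:ℝ)/2) else 0) := by
          exact mul_le_mul_of_nonneg_left (Finset.sum_le_sum hterm) (by positivity)
      _ = (1/D) * ∑ j ∈ Finset.Icc ((q:ℕ)+1) n, (L:ℝ) * ‖x q - y q‖ * (j:ℝ)^(-(3:ℝ)/2) := by
          rw [← Finset.sum_filter, hfilter]
      _ = M := by
          rw [← Finset.mul_sum, ← hT, hM]
          ring
  · -- second inequality
    have hTb : T ≤ 6 / Real.sqrt ((q:ℕ)+1) := by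
      have h3 := tail_bound ((q:ℕ)+1) n (by omega)
      rw [hT]
      push_cast at h3 ⊢
      exact h3
    have hsq : (0:ℝ) < Real.sqrt ((q:ℕ)+1) := Real.sqrt_pos.2 (by positivity)
    calc (L:ℝ)/D * T ≤ (L:ℝ)/D * (6 / Real.sqrt ((q:ℕ)+1)) := by
          exact mul_le_mul_of_nonneg_left hTb (by positivity)
      _ = 6 * (L:ℝ) / (Real.sqrt ((q:ℕ)+1) * D) := by
          field_simp
end

section
/- Let (S_j) be random variables with E(S_j²) ≤ c j for all j, let D_n = ∑_{k=1}^n 1/k, and set n_k = ⌈e^{k^{1+ρ}}⌉ for some 0 < ρ < 1. Define T_k = (1/D_{n_k}) ∑_{j=n_k+1}^{n_{k+1}} |S_j|/j^{3/2}. Then E(T_k²) ≤ C/k² for a constant C, hence ∑_k E(T_k²) < ∞ and T_k → 0 almost surely. -/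
open MeasureTheory ProbabilityTheory Finset Filter
open scoped ENNReal NNReal

section Helpers

lemma asclt_one_le_rpow' {x z : ℝ} (hx : 1 ≤ x) (hz : 0 ≤ z) : 1 ≤ x ^ z := by
  calc (1:ℝ) = 1 ^ z := (Real.one_rpow z).symm
    _ ≤ x ^ z := Real.rpow_le_rpow (by norm_num) hx hz

lemma asclt_diff_bound (ρ : ℝ) (hρ0 : 0 ≤ ρ) (hρ1 : ρ ≤ 1) (k : ℕ) (hk : 1 ≤ k) :
    ((k:ℝ)+1) ^ (1+ρ) ≤ (k:ℝ) ^ (1+ρ) + 3 * (k:ℝ) ^ ρ := by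
  have hk1 : (1:ℝ) ≤ (k:ℝ) := by exact_mod_cast hk
  have hkpos : (0:ℝ) < (k:ℝ) := by linarith
  have h1 : ((k:ℝ)+1) = (k:ℝ) * (1 + 1/(k:ℝ)) := by field_simp
  rw [h1, Real.mul_rpow hkpos.le (by positivity)]
  have hb1 : (1:ℝ) ≤ 1 + 1/(k:ℝ) :=
    le_add_of_nonneg_right (by positivity)
  have h2 : (1 + 1/(k:ℝ)) ^ (1+ρ) ≤ (1 + 1/(k:ℝ)) ^ (2:ℝ) :=
    Real.rpow_le_rpow_of_exponent_le hb1 (by linarith)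
  have h3 : (1 + 1/(k:ℝ)) ^ (2:ℝ) ≤ 1 + 3/(k:ℝ) := by
    rw [Real.rpow_two]
    have h4 : 1/(k:ℝ)^2 ≤ 1/(k:ℝ) := by
      apply div_le_div_of_nonneg_left (by norm_num) hkpos
      nlinarith
    field_simp
    nlinarith
  have h5 : (k:ℝ) ^ (1+ρ) = (k:ℝ) * (k:ℝ) ^ ρ := by
    rw [Real.rpow_add hkpos, Real.rpow_one]
  have hkr : (0:ℝ) < (k:ℝ) ^ ρ := Real.rpow_pos_of_pos hkpos ρ
  have h6 : (1 + 1/(k:ℝ)) ^ (1+ρ) ≤ 1 + 3/(k:ℝ) := le_trans h2 h3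
  calc (k:ℝ) ^ (1+ρ) * (1 + 1/(k:ℝ)) ^ (1+ρ)
      ≤ (k:ℝ) ^ (1+ρ) * (1 + 3/(k:ℝ)) := by
        apply mul_le_mul_of_nonneg_left h6 (Real.rpow_nonneg hkpos.le _)
    _ = (k:ℝ) ^ (1+ρ) + 3 * (k:ℝ)^ρ := by
        rw [h5]; field_simp

lemma asclt_Dsum_eq (n : ℕ) : ∑ i ∈ Finset.Icc 1 n, (1 / (i:ℝ)) = (harmonic n : ℝ) := by
  rw [harmonic_eq_sum_Icc]; push_cast; simp [one_div]

lemma asclt_nseq_ge_exp (ρ : ℝ) (nseq : ℕ → ℕ)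
    (hnseq : ∀ k, nseq k = ⌈Real.exp ((k : ℝ) ^ (1 + ρ))⌉₊) (k : ℕ) :
    Real.exp ((k : ℝ) ^ (1 + ρ)) ≤ (nseq k : ℝ) := by
  rw [hnseq]; exact Nat.le_ceil _

lemma asclt_nseq_pos (ρ : ℝ) (nseq : ℕ → ℕ)
    (hnseq : ∀ k, nseq k = ⌈Real.exp ((k : ℝ) ^ (1 + ρ))⌉₊) (k : ℕ) : 1 ≤ nseq k := by
  rw [hnseq]
  exact Nat.one_le_iff_ne_zero.mpr (by
    simp only [ne_eq, Nat.ceil_eq_zero, not_le]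
    exact Real.exp_pos _)

lemma asclt_Dsum_pos (n : ℕ) (hn : 1 ≤ n) : 0 < ∑ i ∈ Finset.Icc 1 n, (1 / (i:ℝ)) := by
  apply Finset.sum_pos
  · intro i hi
    have : 1 ≤ i := (Finset.mem_Icc.mp hi).1
    positivity
  · exact ⟨1, Finset.mem_Icc.mpr ⟨le_refl 1, hn⟩⟩

lemma asclt_Dsum_ge (ρ : ℝ) (hρ0 : 0 < ρ) (nseq : ℕ → ℕ)
    (hnseq : ∀ k, nseq k = ⌈Real.exp ((k : ℝ) ^ (1 + ρ))⌉₊) (k : ℕ) :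
    (k : ℝ) ^ (1 + ρ) ≤ ∑ i ∈ Finset.Icc 1 (nseq k), (1 / (i:ℝ)) := by
  rw [asclt_Dsum_eq]
  calc (k:ℝ) ^ (1+ρ) = Real.log (Real.exp ((k:ℝ)^(1+ρ))) := (Real.log_exp _).symm
    _ ≤ Real.log (nseq k) :=
        Real.log_le_log (Real.exp_pos _) (asclt_nseq_ge_exp ρ nseq hnseq k)
    _ ≤ Real.log ((nseq k : ℝ) + 1) :=
        Real.log_le_log (by exact_mod_cast asclt_nseq_pos ρ nseq hnseq k) (by linarith)
    _ ≤ (harmonic (nseq k) : ℝ) := by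
        have := log_add_one_le_harmonic (nseq k)
        push_cast at this ⊢
        linarith

lemma asclt_nseq_mono (ρ : ℝ) (hρ0 : 0 < ρ) (nseq : ℕ → ℕ)
    (hnseq : ∀ k, nseq k = ⌈Real.exp ((k : ℝ) ^ (1 + ρ))⌉₊) (k : ℕ) :
    nseq k ≤ nseq (k+1) := by
  rw [hnseq, hnseq]
  apply Nat.ceil_le_ceil
  apply Real.exp_le_exp.mpr
  apply Real.rpow_le_rpow (Nat.cast_nonneg k) (by push_cast; linarith) (by linarith)

lemma asclt_block_bound (ρ : ℝ) (hρ0 : 0 < ρ) (hρ1 : ρ < 1) (nseq : ℕ → ℕ)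
    (hnseq : ∀ k, nseq k = ⌈Real.exp ((k : ℝ) ^ (1 + ρ))⌉₊) (k : ℕ) (hk : 1 ≤ k) :
    ∑ j ∈ Finset.Icc (nseq k + 1) (nseq (k+1)), (1 / (j:ℝ)) ≤ 5 * (k:ℝ) ^ ρ := by
  set n := nseq k with hn
  set m := nseq (k+1) with hm
  have hnm : n ≤ m := asclt_nseq_mono ρ hρ0 nseq hnseq k
  have hsplit : ∑ i ∈ Finset.Icc 1 n, (1/(i:ℝ)) + ∑ j ∈ Finset.Icc (n+1) m, (1/(j:ℝ))
      = ∑ i ∈ Finset.Icc 1 m, (1/(i:ℝ)) := by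
    have h0 : Finset.Icc 1 n = Finset.Ioc 0 n := by rw [← Finset.Icc_add_one_left_eq_Ioc]; rfl
    have h1 : Finset.Icc (n+1) m = Finset.Ioc n m := by rw [← Finset.Icc_add_one_left_eq_Ioc]
    have h2 : Finset.Icc 1 m = Finset.Ioc 0 m := by rw [← Finset.Icc_add_one_left_eq_Ioc]; rfl
    rw [h0, h1, h2]
    exact Finset.sum_Ioc_consecutive _ (Nat.zero_le n) hnm
  have hblock : ∑ j ∈ Finset.Icc (n+1) m, (1/(j:ℝ))
      = ∑ i ∈ Finset.Icc 1 m, (1/(i:ℝ)) - ∑ i ∈ Finset.Icc 1 n, (1/(i:ℝ)) := by linarith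
  rw [hblock, asclt_Dsum_eq, asclt_Dsum_eq]
  have hm1 : 1 ≤ m := asclt_nseq_pos ρ nseq hnseq (k+1)
  have hmpos : (0:ℝ) < (m:ℝ) := by exact_mod_cast hm1
  have hup : (harmonic m : ℝ) ≤ 1 + Real.log m := harmonic_le_one_add_log m
  have hexp : (0:ℝ) < Real.exp (((k:ℝ)+1) ^ (1 + ρ)) := Real.exp_pos _
  have hmle : (m:ℝ) ≤ 2 * Real.exp (((k:ℝ)+1) ^ (1 + ρ)) := by
    have h1 : (m:ℝ) < Real.exp ((((k:ℕ)+1:ℕ):ℝ) ^ (1 + ρ)) + 1 := by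
      rw [hm, hnseq]; exact Nat.ceil_lt_add_one (Real.exp_pos _).le
    have h2 : (1:ℝ) ≤ Real.exp (((k:ℝ)+1) ^ (1 + ρ)) := by
      apply Real.one_le_exp; positivity
    push_cast at h1
    linarith
  have hlogm : Real.log m ≤ Real.log 2 + ((k:ℝ)+1) ^ (1 + ρ) := by
    calc Real.log m ≤ Real.log (2 * Real.exp (((k:ℝ)+1) ^ (1 + ρ))) :=
          Real.log_le_log hmpos hmle
      _ = Real.log 2 + ((k:ℝ)+1) ^ (1 + ρ) := by
          rw [Real.log_mul (by norm_num) hexp.ne', Real.log_exp]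
  have hlow : (k:ℝ) ^ (1+ρ) ≤ (harmonic n : ℝ) := by
    rw [← asclt_Dsum_eq]; exact asclt_Dsum_ge ρ hρ0 nseq hnseq k
  have hdiff : ((k:ℝ)+1) ^ (1+ρ) ≤ (k:ℝ) ^ (1+ρ) + 3 * (k:ℝ) ^ ρ :=
    asclt_diff_bound ρ hρ0.le hρ1.le k hk
  have hkρ : (1:ℝ) ≤ (k:ℝ) ^ ρ := asclt_one_le_rpow' (by exact_mod_cast hk) hρ0.le
  have hlog2 : Real.log 2 ≤ 1 := by
    have := Real.log_le_sub_one_of_pos (by norm_num : (0:ℝ) < 2)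
    linarith
  linarith

lemma asclt_eLpNorm_le_of_int_sq_le {Ω : Type*} [MeasurableSpace Ω] (P : Measure Ω)
    [IsProbabilityMeasure P]
    (f : Ω → ℝ) (hmem : MemLp f 2 P) (b : ℝ)
    (hint : (∫ ω, (f ω) ^ 2 ∂P) ≤ b) :
    eLpNorm f 2 P ≤ ENNReal.ofReal (Real.sqrt b) := by
  rw [hmem.eLpNorm_eq_integral_rpow_norm two_ne_zero ENNReal.ofNat_ne_top]
  apply ENNReal.ofReal_le_ofReal
  have hconv : (fun a => ‖f a‖ ^ (2:ℝ≥0∞).toReal) = fun a => (f a)^2 := by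
    funext a
    rw [ENNReal.toReal_ofNat, Real.rpow_two, Real.norm_eq_abs, sq_abs]
  rw [hconv, Real.sqrt_eq_rpow]
  have h0 : 0 ≤ ∫ ω, (f ω)^2 ∂P := integral_nonneg fun ω => sq_nonneg _
  rw [ENNReal.toReal_ofNat]
  norm_num
  exact Real.rpow_le_rpow h0 hint (by norm_num)

end Helpers

set_option maxHeartbeats 800000 in
theorem asclt_block_sums_to_zero
    {Ω : Type*} [MeasurableSpace Ω] (P : Measure Ω) [IsProbabilityMeasure P]
    (S : ℕ → Ω → ℝ) (hmeas : ∀ j, Measurable (S j)) (hmem : ∀ j, MemLp (S j) 2 P)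
    (c : ℝ) (hc : 0 ≤ c) (hS : ∀ j : ℕ, 1 ≤ j → (∫ ω, (S j ω) ^ 2 ∂P) ≤ c * j)
    (ρ : ℝ) (hρ0 : 0 < ρ) (hρ1 : ρ < 1)
    (nseq : ℕ → ℕ) (hnseq : ∀ k, nseq k = ⌈Real.exp ((k : ℝ) ^ (1 + ρ))⌉₊)
    (T : ℕ → Ω → ℝ)
    (hT : ∀ k ω, T k ω =
      (1 / ∑ i ∈ Finset.Icc 1 (nseq k), (1 / (i : ℝ))) *
        ∑ j ∈ Finset.Icc (nseq k + 1) (nseq (k + 1)), |S j ω| / (j : ℝ) ^ ((3 : ℝ) / 2)) :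
    ∃ C > 0, (∀ k : ℕ, 1 ≤ k → (∫ ω, (T k ω) ^ 2 ∂P) ≤ C / (k : ℝ) ^ 2) ∧
      Summable (fun k => ∫ ω, (T k ω) ^ 2 ∂P) ∧
      ∀ᵐ ω ∂P, Tendsto (fun k => T k ω) atTop (nhds 0) := by
  -- notation
  set D : ℕ → ℝ := fun k => ∑ i ∈ Finset.Icc 1 (nseq k), (1 / (i : ℝ)) with hD
  have hD0 : ∀ k, 0 < D k := fun k =>
    asclt_Dsum_pos _ (asclt_nseq_pos ρ nseq hnseq k)
  have hTfun : ∀ k, T k = fun ω =>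
      (1 / D k) * ∑ j ∈ Finset.Icc (nseq k + 1) (nseq (k + 1)),
        |S j ω| / (j : ℝ) ^ ((3 : ℝ) / 2) := fun k => funext fun ω => hT k ω
  -- basic properties of T
  have hfmeas : ∀ j : ℕ, Measurable (fun ω => |S j ω| / (j : ℝ) ^ ((3 : ℝ) / 2)) :=
    fun j => (hmeas j).abs.div_const _
  have hfmem : ∀ j : ℕ, MemLp (fun ω => |S j ω| / (j : ℝ) ^ ((3 : ℝ) / 2)) 2 P := by
    intro j
    have h1 : MemLp (fun ω => |S j ω|) 2 P := (hmem j).abs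
    have h2 := h1.const_mul (((j : ℝ) ^ ((3 : ℝ) / 2))⁻¹)
    apply h2.congr_norm ((hfmeas j).aestronglyMeasurable)
    filter_upwards with ω
    rw [div_eq_mul_inv]
    congr 1
    ring
  have hTmeas : ∀ k, Measurable (T k) := by
    intro k
    rw [hTfun k]
    exact measurable_const.mul (Finset.measurable_sum _ fun j _ => hfmeas j)
  have hTmem : ∀ k, MemLp (T k) 2 P := by
    intro k
    rw [hTfun k]
    have hsum : MemLp (fun ω => ∑ j ∈ Finset.Icc (nseq k + 1) (nseq (k + 1)),
        |S j ω| / (j : ℝ) ^ ((3 : ℝ) / 2)) 2 P := by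
      have := memLp_finset_sum' (μ := P) (p := 2) (Finset.Icc (nseq k + 1) (nseq (k + 1)))
        (f := fun j ω => |S j ω| / (j : ℝ) ^ ((3 : ℝ) / 2)) (fun j _ => hfmem j)
      apply this.congr_norm
        ((Finset.measurable_sum _ fun j _ => hfmeas j).aestronglyMeasurable)
      filter_upwards with ω
      simp [Finset.sum_apply]
    exact hsum.const_mul _
  have hTnonneg : ∀ k ω, 0 ≤ T k ω := by
    intro k ω
    rw [hT k ω]
    apply mul_nonneg (one_div_nonneg.mpr (hD0 k).le)
    apply Finset.sum_nonneg
    intro j hj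
    positivity
  have hint : ∀ k, Integrable (fun ω => T k ω ^ 2) P := fun k => (hTmem k).integrable_sq
  have hInonneg : ∀ k, 0 ≤ ∫ ω, T k ω ^ 2 ∂P := fun k =>
    integral_nonneg fun ω => sq_nonneg _
  -- main quantitative bound
  set C : ℝ := 25 * c + 1 with hCdef
  have hC : 0 < C := by positivity
  have hbound : ∀ k : ℕ, 1 ≤ k → (∫ ω, (T k ω) ^ 2 ∂P) ≤ C / (k : ℝ) ^ 2 := by
    intro k hk
    have hk1 : (1:ℝ) ≤ (k:ℝ) := by exact_mod_cast hk
    have hkpos : (0:ℝ) < (k:ℝ) := by linarith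
    set s := Finset.Icc (nseq k + 1) (nseq (k + 1)) with hs
    set Sb : ℝ := ∑ j ∈ s, (1 / (j:ℝ)) with hSb
    have hSb0 : 0 ≤ Sb := Finset.sum_nonneg fun j hj => by positivity
    set B : ℝ := Real.sqrt c * (Sb / D k) with hB
    have hB0 : 0 ≤ B := mul_nonneg (Real.sqrt_nonneg c) (div_nonneg hSb0 (hD0 k).le)
    -- eLpNorm bound
    have hsle : eLpNorm (T k) 2 P ≤ ENNReal.ofReal B := by
      have hTk2 : T k = (1 / D k) • (fun ω => ∑ j ∈ s,
          |S j ω| / (j : ℝ) ^ ((3 : ℝ) / 2)) := by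
        rw [hTfun k]; rfl
      rw [hTk2, eLpNorm_const_smul]
      have hsum_eq : (fun ω => ∑ j ∈ s, |S j ω| / (j : ℝ) ^ ((3 : ℝ) / 2))
          = ∑ j ∈ s, (fun ω => |S j ω| / (j : ℝ) ^ ((3 : ℝ) / 2)) := by
        funext ω; simp [Finset.sum_apply]
      have hsumle : eLpNorm (fun ω => ∑ j ∈ s,
          |S j ω| / (j : ℝ) ^ ((3 : ℝ) / 2)) 2 P
          ≤ ∑ j ∈ s, ENNReal.ofReal (Real.sqrt c * (1 / (j:ℝ))) := by
        rw [hsum_eq]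
        refine le_trans (eLpNorm_sum_le
          (fun j _ => (hfmeas j).aestronglyMeasurable) one_le_two) ?_
        apply Finset.sum_le_sum
        intro j hj
        have hj1 : 1 ≤ j := le_trans (Nat.le_add_left 1 (nseq k)) (Finset.mem_Icc.mp hj).1
        have hjR : (1:ℝ) ≤ (j:ℝ) := by exact_mod_cast hj1
        have hjpos : (0:ℝ) < (j:ℝ) := by linarith
        have hjp : (0:ℝ) < (j:ℝ) ^ ((3:ℝ)/2) := Real.rpow_pos_of_pos hjpos _
        -- rewrite as const • |S j|
        have hfj : (fun ω => |S j ω| / (j : ℝ) ^ ((3 : ℝ) / 2))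
            = (((j : ℝ) ^ ((3 : ℝ) / 2))⁻¹) • (fun ω => ‖S j ω‖) := by
          funext ω
          simp only [Pi.smul_apply, smul_eq_mul, Real.norm_eq_abs]
          rw [div_eq_mul_inv, mul_comm]
        rw [hfj, eLpNorm_const_smul, eLpNorm_norm]
        have h2 : eLpNorm (S j) 2 P ≤ ENNReal.ofReal (Real.sqrt (c * j)) :=
          asclt_eLpNorm_le_of_int_sq_le P (S j) (hmem j) _ (hS j hj1)
        have h3 : ‖(((j : ℝ) ^ ((3 : ℝ) / 2))⁻¹)‖ₑ
            = ENNReal.ofReal (((j : ℝ) ^ ((3 : ℝ) / 2))⁻¹) :=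
          Real.enorm_eq_ofReal (by positivity)
        rw [h3]
        refine le_trans (mul_le_mul_right h2 _) ?_
        rw [← ENNReal.ofReal_mul (by positivity)]
        apply ENNReal.ofReal_le_ofReal
        -- real computation
        rw [Real.sqrt_mul hc]
        have h4 : ((j:ℝ) ^ ((3:ℝ)/2))⁻¹ * (Real.sqrt c * Real.sqrt j)
            = Real.sqrt c * (((j:ℝ) ^ ((3:ℝ)/2))⁻¹ * Real.sqrt j) := by ring
        rw [h4]
        apply mul_le_mul_of_nonneg_left _ (Real.sqrt_nonneg c)
        have h5 : ((j:ℝ) ^ ((3:ℝ)/2))⁻¹ * Real.sqrt j = 1/(j:ℝ) := by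
          rw [Real.sqrt_eq_rpow, ← Real.rpow_neg hjpos.le, ← Real.rpow_add hjpos]
          norm_num
          exact Real.rpow_neg_one _
        rw [h5]
      calc ‖(1 / D k)‖ₑ * eLpNorm (fun ω => ∑ j ∈ s,
            |S j ω| / (j : ℝ) ^ ((3 : ℝ) / 2)) 2 P
          ≤ ‖(1 / D k)‖ₑ * ∑ j ∈ s, ENNReal.ofReal (Real.sqrt c * (1 / (j:ℝ))) :=
            mul_le_mul_right hsumle _
        _ = ENNReal.ofReal B := by
            rw [Real.enorm_eq_ofReal (one_div_nonneg.mpr (hD0 k).le),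
              ← ENNReal.ofReal_sum_of_nonneg (fun j hj => by positivity),
              ← ENNReal.ofReal_mul (one_div_nonneg.mpr (hD0 k).le), ← Finset.mul_sum]
            congr 1
            rw [hB, hSb]
            field_simp
    -- from eLpNorm bound to integral bound
    set I : ℝ := ∫ ω, (T k ω) ^ 2 ∂P with hI
    have hI0 : 0 ≤ I := hInonneg k
    have hEq : eLpNorm (T k) 2 P = ENNReal.ofReal (I ^ ((2:ℝ))⁻¹) := by
      rw [(hTmem k).eLpNorm_eq_integral_rpow_norm two_ne_zero ENNReal.ofNat_ne_top]
      congr 1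
      have hconv : (fun a => ‖T k a‖ ^ (2:ℝ≥0∞).toReal) = fun a => (T k a)^2 := by
        funext a
        rw [ENNReal.toReal_ofNat, Real.rpow_two, Real.norm_eq_abs, sq_abs]
      rw [hconv, ENNReal.toReal_ofNat]
    have hIB : I ^ ((2:ℝ))⁻¹ ≤ B := by
      rw [hEq] at hsle
      exact (ENNReal.ofReal_le_ofReal_iff hB0).mp hsle
    have hIB2 : I ≤ B ^ 2 := by
      have h1 : I = (I ^ ((2:ℝ))⁻¹) ^ (2:ℕ) := by
        rw [← Real.rpow_natCast (I ^ ((2:ℝ))⁻¹) 2, ← Real.rpow_mul hI0]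
        norm_num
      rw [h1]
      exact pow_le_pow_left₀ (Real.rpow_nonneg hI0 _) hIB 2
    -- bound B^2
    have hDge : (k:ℝ) ^ (1+ρ) ≤ D k := asclt_Dsum_ge ρ hρ0 nseq hnseq k
    have hDrpos : (0:ℝ) < (k:ℝ) ^ (1+ρ) := Real.rpow_pos_of_pos hkpos _
    have hSumle : Sb ≤ 5 * (k:ℝ) ^ ρ := asclt_block_bound ρ hρ0 hρ1 nseq hnseq k hk
    have hratio : Sb / D k ≤ 5 / (k:ℝ) := by
      have h1 : Sb / D k ≤ (5 * (k:ℝ) ^ ρ) / ((k:ℝ) ^ (1+ρ)) :=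
        div_le_div₀ (by positivity) hSumle hDrpos hDge
      have h2 : (5 * (k:ℝ) ^ ρ) / ((k:ℝ) ^ (1+ρ)) = 5 / (k:ℝ) := by
        rw [Real.rpow_add hkpos, Real.rpow_one]
        have hkρ : (0:ℝ) < (k:ℝ) ^ ρ := Real.rpow_pos_of_pos hkpos ρ
        field_simp
      linarith
    have hBle : B ≤ Real.sqrt c * (5 / (k:ℝ)) :=
      mul_le_mul_of_nonneg_left hratio (Real.sqrt_nonneg c)
    have hB2 : B ^ 2 ≤ C / (k:ℝ) ^ 2 := by
      have h1 : B ^ 2 ≤ (Real.sqrt c * (5 / (k:ℝ))) ^ 2 := pow_le_pow_left₀ hB0 hBle 2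
      have h2 : (Real.sqrt c * (5 / (k:ℝ))) ^ 2 = 25 * c / (k:ℝ) ^ 2 := by
        rw [mul_pow, Real.sq_sqrt hc]
        field_simp
        ring
      have h3 : 25 * c / (k:ℝ) ^ 2 ≤ C / (k:ℝ) ^ 2 :=
        (div_le_div_iff_of_pos_right (by positivity)).mpr (by rw [hCdef]; linarith)
      linarith
    linarith
  -- summability
  have hsummC : Summable (fun k : ℕ => C / ((k:ℝ))^2) := by
    have h := (Real.summable_one_div_nat_pow.mpr one_lt_two).mul_left C
    simpa [div_eq_mul_inv] using h
  have hsumm : Summable (fun k => ∫ ω, (T k ω) ^ 2 ∂P) := by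
    rw [← summable_nat_add_iff 1]
    exact Summable.of_nonneg_of_le (fun k => hInonneg (k+1))
      (fun k => hbound (k+1) (Nat.le_add_left 1 k))
      ((summable_nat_add_iff 1).mpr hsummC)
  -- almost sure convergence
  have hofReal_meas : ∀ k, Measurable (fun ω => ENNReal.ofReal (T k ω ^ 2)) :=
    fun k => ((hTmeas k).pow_const 2).ennreal_ofReal
  have hlint : ∀ k, ∫⁻ ω, ENNReal.ofReal (T k ω ^ 2) ∂P
      = ENNReal.ofReal (∫ ω, T k ω ^ 2 ∂P) := fun k =>
    (ofReal_integral_eq_lintegral_ofReal (hint k)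
      (ae_of_all _ fun ω => sq_nonneg _)).symm
  have htsum : ∫⁻ ω, ∑' k, ENNReal.ofReal (T k ω ^ 2) ∂P < ⊤ := by
    rw [lintegral_tsum (fun k => (hofReal_meas k).aemeasurable)]
    rw [tsum_congr hlint, ← ENNReal.ofReal_tsum_of_nonneg hInonneg hsumm]
    exact ENNReal.ofReal_lt_top
  have hae : ∀ᵐ ω ∂P, ∑' k, ENNReal.ofReal (T k ω ^ 2) < ⊤ :=
    ae_lt_top (Measurable.ennreal_tsum hofReal_meas) htsum.ne
  refine ⟨C, hC, hbound, hsumm, ?_⟩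
  filter_upwards [hae] with ω hω
  have h1 : Tendsto (fun k => ENNReal.ofReal (T k ω ^ 2)) atTop (nhds 0) :=
    ENNReal.tendsto_atTop_zero_of_tsum_ne_top hω.ne
  have h2 : Tendsto (fun k => T k ω ^ 2) atTop (nhds 0) := by
    have h := (ENNReal.tendsto_toReal (by simp : (0:ℝ≥0∞) ≠ ⊤)).comp h1
    simp only [ENNReal.toReal_zero] at h
    exact h.congr (fun k => ENNReal.toReal_ofReal (sq_nonneg _))
  have h3 : Tendsto (fun k => Real.sqrt (T k ω ^ 2)) atTop (nhds 0) := by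
    have h := (Real.continuous_sqrt.tendsto 0).comp h2
    simpa [Function.comp_def] using h
  exact h3.congr (fun k => Real.sqrt_sq (hTnonneg k ω))
end

section
/- Suppose (X_k) satisfies Devroye inequality with constant D for η-Hölder functions and ‖X_k‖ ≤ A a.s. For a Lipschitz φ : ℝ → ℝ, define K^φ_{n,ε}(x₁,…,xₙ) = (1/n²)∑_{i≠j} φ(1 − d(x_i,x_j)/ε). Then K^φ_{n,ε} is separately η-Hölder in each variable with constant L_j ≤ C₀ ε^{−η}/n for a constant C₀ depending on φ and η, and hence var(K^φ_{n,ε}(X₁,…,X_n)) ≤ C ε^{−2η}/n. -/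
open MeasureTheory ProbabilityTheory Finset

lemma lip_bdd_holder (φ : ℝ → ℝ) (L : NNReal) (hlip : LipschitzWith L φ)
    (M : ℝ) (hM : ∀ t, |φ t| ≤ M) (η : ℝ) (hη : 0 < η) (hη1 : η ≤ 1) (a b : ℝ) :
    |φ a - φ b| ≤ (L : ℝ) ^ η * (2 * M) ^ (1 - η) * |a - b| ^ η := by
  have hM0 : 0 ≤ M := (abs_nonneg _).trans (hM 0)
  have h1 : |φ a - φ b| ≤ (L : ℝ) * |a - b| := by
    have := hlip.dist_le_mul a b
    simpa [Real.dist_eq] using this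
  have h2 : |φ a - φ b| ≤ 2 * M := by
    calc |φ a - φ b| ≤ |φ a| + |φ b| := abs_sub _ _
    _ ≤ 2 * M := by have := hM a; have := hM b; linarith
  set t : ℝ := (L : ℝ) * |a - b| with ht
  have ht0 : 0 ≤ t := by positivity
  rcases eq_or_lt_of_le ht0 with h0 | htpos
  · have : |φ a - φ b| ≤ 0 := by rw [← h0] at h1; exact h1
    have hrhs : 0 ≤ (L : ℝ) ^ η * (2 * M) ^ (1 - η) * |a - b| ^ η := by positivity
    linarith
  rcases eq_or_lt_of_le hM0 with hMz | hMpos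
  · have : |φ a - φ b| ≤ 0 := by rw [← hMz] at h2; linarith
    have hrhs : 0 ≤ (L : ℝ) ^ η * (2 * M) ^ (1 - η) * |a - b| ^ η := by positivity
    linarith
  have hLt : (L : ℝ) ^ η * |a - b| ^ η = t ^ η := by
    rw [ht, Real.mul_rpow (NNReal.coe_nonneg L) (abs_nonneg _)]
  rw [mul_comm ((L:ℝ)^η) ((2*M)^(1-η)), mul_assoc, hLt]
  by_cases hc : t ≤ 2 * M
  · calc |φ a - φ b| ≤ t := h1
    _ = t ^ η * t ^ (1 - η) := by
        rw [← Real.rpow_add htpos]; ring_nf; rw [Real.rpow_one]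
    _ ≤ (2 * M) ^ (1 - η) * t ^ η := by
        rw [mul_comm ((2*M)^(1-η))]
        exact mul_le_mul_of_nonneg_left
          (Real.rpow_le_rpow htpos.le hc (by linarith)) (Real.rpow_nonneg htpos.le _)
  · push_neg at hc
    calc |φ a - φ b| ≤ 2 * M := h2
    _ = (2 * M) ^ (1 - η) * (2 * M) ^ η := by
        rw [← Real.rpow_add (by linarith)]; ring_nf; rw [Real.rpow_one]
    _ ≤ (2 * M) ^ (1 - η) * t ^ η :=
        mul_le_mul_of_nonneg_left
          (Real.rpow_le_rpow (by linarith) hc.le hη.le) (Real.rpow_nonneg (by linarith) _)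

theorem correlation_sum_holder_and_variance
    {Ω : Type*} [MeasurableSpace Ω] (P : Measure Ω) [IsProbabilityMeasure P]
    {d : ℕ} (X : ℕ → Ω → EuclideanSpace ℝ (Fin d)) (hmeas : ∀ k, Measurable (X k))
    (η : ℝ) (hη : 0 < η) (hη1 : η ≤ 1)
    (A : ℝ) (hA : 0 < A) (hbdd : ∀ k, ∀ᵐ ω ∂P, ‖X k ω‖ ≤ A)
    (D : ℝ) (hD : 0 ≤ D)
    -- Devroye inequality for η-Hölder functions:
    (hDev : ∀ (m : ℕ) (K : (Fin m → EuclideanSpace ℝ (Fin d)) → ℝ) (L : Fin m → ℝ),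
      (∀ (j : Fin m) (x y : Fin m → EuclideanSpace ℝ (Fin d)),
          (∀ i, i ≠ j → x i = y i) → |K x - K y| ≤ L j * ‖x j - y j‖ ^ η) →
      variance (fun ω => K (fun i => X ((i : ℕ) + 1) ω)) P ≤ D * ∑ j, (L j) ^ 2)
    (φ : ℝ → ℝ) (Lφ : NNReal) (hφlip : LipschitzWith Lφ φ)
    (Mφ : ℝ) (hφbdd : ∀ t, |φ t| ≤ Mφ) :
    ∃ C₀ > 0, ∃ C > 0, ∀ n : ℕ, 1 ≤ n → ∀ ε : ℝ, 0 < ε →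
      (∀ (j : Fin n) (x y : Fin n → EuclideanSpace ℝ (Fin d)),
        (∀ i, i ≠ j → x i = y i) →
        |(1 / (n : ℝ) ^ 2) * (∑ i : Fin n, ∑ i' ∈ Finset.univ.filter (fun i' => i' ≠ i),
              φ (1 - dist (x i) (x i') / ε)) -
          (1 / (n : ℝ) ^ 2) * (∑ i : Fin n, ∑ i' ∈ Finset.univ.filter (fun i' => i' ≠ i),
              φ (1 - dist (y i) (y i') / ε))| ≤
          C₀ * ε ^ (-η) / n * ‖x j - y j‖ ^ η) ∧
      variance (fun ω =>
          (1 / (n : ℝ) ^ 2) * ∑ i : Fin n, ∑ i' ∈ Finset.univ.filter (fun i' => i' ≠ i),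
            φ (1 - dist (X ((i : ℕ) + 1) ω) (X ((i' : ℕ) + 1) ω) / ε)) P ≤
        C * ε ^ (-(2 * η)) / n := by
  have hM0 : 0 ≤ Mφ := (abs_nonneg _).trans (hφbdd 0)
  set C₁ : ℝ := (Lφ : ℝ) ^ η * (2 * Mφ) ^ (1 - η) with hC₁
  have hC₁0 : 0 ≤ C₁ := by positivity
  refine ⟨2 * C₁ + 1, by positivity, D * (2 * C₁ + 1) ^ 2 + 1, by positivity, ?_⟩
  intro n hn ε hε
  have hεη : (0:ℝ) < ε ^ (-η) := Real.rpow_pos_of_pos hε _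
  have hn0 : (0:ℝ) < n := by exact_mod_cast hn
  have key : ∀ (j : Fin n) (x y : Fin n → EuclideanSpace ℝ (Fin d)),
      (∀ i, i ≠ j → x i = y i) →
      |(1 / (n : ℝ) ^ 2) * (∑ i : Fin n, ∑ i' ∈ Finset.univ.filter (fun i' => i' ≠ i),
            φ (1 - dist (x i) (x i') / ε)) -
        (1 / (n : ℝ) ^ 2) * (∑ i : Fin n, ∑ i' ∈ Finset.univ.filter (fun i' => i' ≠ i),
            φ (1 - dist (y i) (y i') / ε))| ≤
        (2 * C₁ + 1) * ε ^ (-η) / n * ‖x j - y j‖ ^ η := by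
    intro j x y hxy
    set B : ℝ := C₁ * ‖x j - y j‖ ^ η * ε ^ (-η) with hB
    have hBnn : 0 ≤ B := by positivity
    -- core estimate
    have core : ∀ u v w : EuclideanSpace ℝ (Fin d),
        |φ (1 - dist u w / ε) - φ (1 - dist v w / ε)| ≤ C₁ * (dist u v) ^ η * ε ^ (-η) := by
      intro u v w
      have hd : |(1 - dist u w / ε) - (1 - dist v w / ε)| ≤ dist u v / ε := by
        have h1 : (1 - dist u w / ε) - (1 - dist v w / ε) = (dist v w - dist u w) / ε := by
          ring
        rw [h1, abs_div, abs_of_pos hε]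
        gcongr
        exact (abs_dist_sub_le v u w).trans_eq (dist_comm v u)
      calc |φ (1 - dist u w / ε) - φ (1 - dist v w / ε)|
          ≤ C₁ * |(1 - dist u w / ε) - (1 - dist v w / ε)| ^ η := by
            rw [hC₁]
            exact lip_bdd_holder φ Lφ hφlip Mφ hφbdd η hη hη1 _ _
        _ ≤ C₁ * (dist u v / ε) ^ η := by
            exact mul_le_mul_of_nonneg_left
              (Real.rpow_le_rpow (abs_nonneg _) hd hη.le) hC₁0
        _ = C₁ * (dist u v) ^ η * ε ^ (-η) := by
            rw [Real.div_rpow dist_nonneg hε.le, Real.rpow_neg hε.le]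
            ring
    -- per-term bound
    have term : ∀ i i' : Fin n, i' ≠ i →
        |φ (1 - dist (x i) (x i') / ε) - φ (1 - dist (y i) (y i') / ε)| ≤
          (if i = j then B else 0) + (if i' = j then B else 0) := by
      intro i i' hii'
      have hBval : C₁ * (dist (x j) (y j)) ^ η * ε ^ (-η) = B := by
        rw [hB, dist_eq_norm]
      by_cases hij : i = j
      · have hi'j : i' ≠ j := fun h => hii' (h.trans hij.symm)
        rw [hij, hxy i' hi'j, if_pos rfl, if_neg hi'j, add_zero]
        exact (core (x j) (y j) (y i')).trans_eq hBval
      · by_cases hi'j : i' = j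
        · rw [hi'j, hxy i hij, if_neg hij, if_pos rfl, zero_add]
          have h := core (x j) (y j) (y i)
          rw [dist_comm (x j) (y i), dist_comm (y j) (y i)] at h
          exact h.trans_eq hBval
        · rw [hxy i hij, hxy i' hi'j, if_neg hij, if_neg hi'j, add_zero, sub_self,
            abs_zero]
    -- sum the bounds
    have sum_bound :
        (∑ i : Fin n, ∑ i' ∈ Finset.univ.filter (fun i' => i' ≠ i),
          |φ (1 - dist (x i) (x i') / ε) - φ (1 - dist (y i) (y i') / ε)|) ≤
          2 * n * B := by
      calc (∑ i : Fin n, ∑ i' ∈ Finset.univ.filter (fun i' => i' ≠ i),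
              |φ (1 - dist (x i) (x i') / ε) - φ (1 - dist (y i) (y i') / ε)|)
          ≤ ∑ i : Fin n, ∑ i' ∈ Finset.univ.filter (fun i' => i' ≠ i),
              ((if i = j then B else 0) + (if i' = j then B else 0)) := by
            refine Finset.sum_le_sum fun i _ => Finset.sum_le_sum fun i' hi' => ?_
            exact term i i' (Finset.mem_filter.mp hi').2
        _ ≤ ∑ i : Fin n, ∑ i' : Fin n,
              ((if i = j then B else 0) + (if i' = j then B else 0)) := by
            refine Finset.sum_le_sum fun i _ => ?_
            refine Finset.sum_le_sum_of_subset_of_nonneg (Finset.filter_subset _ _)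
              fun i' _ _ => ?_
            positivity
        _ = 2 * n * B := by
            have h1 : ∀ c : ℝ, (∑ i : Fin n, if i = j then c else 0) = c := by
              intro c; simp
            calc (∑ i : Fin n, ∑ i' : Fin n,
                    ((if i = j then B else 0) + (if i' = j then B else 0)))
                = ∑ i : Fin n, ((n : ℝ) * (if i = j then B else 0) + B) := by
                  refine Finset.sum_congr rfl fun i _ => ?_
                  rw [Finset.sum_add_distrib, Finset.sum_const, Finset.card_univ,
                    Fintype.card_fin, nsmul_eq_mul, h1]
              _ = (∑ i : Fin n, (n : ℝ) * (if i = j then B else 0)) +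
                    ∑ _i : Fin n, B := Finset.sum_add_distrib
              _ = 2 * n * B := by
                  rw [← Finset.mul_sum, h1, Finset.sum_const, Finset.card_univ,
                    Fintype.card_fin, nsmul_eq_mul]
                  ring
    have habs :
        |(1 / (n : ℝ) ^ 2) * (∑ i : Fin n, ∑ i' ∈ Finset.univ.filter (fun i' => i' ≠ i),
              φ (1 - dist (x i) (x i') / ε)) -
          (1 / (n : ℝ) ^ 2) * (∑ i : Fin n, ∑ i' ∈ Finset.univ.filter (fun i' => i' ≠ i),
              φ (1 - dist (y i) (y i') / ε))| ≤ (1 / (n : ℝ) ^ 2) * (2 * n * B) := by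
      rw [← mul_sub, abs_mul, abs_of_nonneg (by positivity : (0:ℝ) ≤ 1 / (n:ℝ)^2)]
      refine mul_le_mul_of_nonneg_left ?_ (by positivity)
      rw [← Finset.sum_sub_distrib]
      calc |∑ i : Fin n, ((∑ i' ∈ Finset.univ.filter (fun i' => i' ≠ i),
                φ (1 - dist (x i) (x i') / ε)) -
              (∑ i' ∈ Finset.univ.filter (fun i' => i' ≠ i),
                φ (1 - dist (y i) (y i') / ε)))|
          ≤ ∑ i : Fin n, |(∑ i' ∈ Finset.univ.filter (fun i' => i' ≠ i),
                φ (1 - dist (x i) (x i') / ε)) -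
              (∑ i' ∈ Finset.univ.filter (fun i' => i' ≠ i),
                φ (1 - dist (y i) (y i') / ε))| := Finset.abs_sum_le_sum_abs _ _
        _ ≤ ∑ i : Fin n, ∑ i' ∈ Finset.univ.filter (fun i' => i' ≠ i),
              |φ (1 - dist (x i) (x i') / ε) - φ (1 - dist (y i) (y i') / ε)| := by
            refine Finset.sum_le_sum fun i _ => ?_
            rw [← Finset.sum_sub_distrib]
            exact Finset.abs_sum_le_sum_abs _ _
        _ ≤ 2 * n * B := sum_bound
    refine habs.trans ?_
    have heq : (1 / (n : ℝ) ^ 2) * (2 * n * B) =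
        2 * C₁ * (ε ^ (-η) / n * ‖x j - y j‖ ^ η) := by
      rw [hB]; field_simp
    rw [heq, show (2 * C₁ + 1) * ε ^ (-η) / n * ‖x j - y j‖ ^ η =
        (2 * C₁ + 1) * (ε ^ (-η) / n * ‖x j - y j‖ ^ η) by ring]
    refine mul_le_mul_of_nonneg_right (by linarith) ?_
    positivity
  refine ⟨key, ?_⟩
  have hvar := hDev n
    (fun z => (1 / (n : ℝ) ^ 2) * ∑ i : Fin n,
      ∑ i' ∈ Finset.univ.filter (fun i' => i' ≠ i), φ (1 - dist (z i) (z i') / ε))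
    (fun _ => (2 * C₁ + 1) * ε ^ (-η) / n) key
  refine hvar.trans ?_
  have hsum : (∑ _j : Fin n, ((2 * C₁ + 1) * ε ^ (-η) / n) ^ 2) =
      n * ((2 * C₁ + 1) * ε ^ (-η) / n) ^ 2 := by
    rw [Finset.sum_const, Finset.card_univ, Fintype.card_fin, nsmul_eq_mul]
  rw [hsum]
  have hsq : ε ^ (-η) * ε ^ (-η) = ε ^ (-(2 * η)) := by
    rw [← Real.rpow_add hε]; ring_nf
  have hEq : D * ((n:ℝ) * ((2 * C₁ + 1) * ε ^ (-η) / n) ^ 2) =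
      D * (2 * C₁ + 1) ^ 2 * ε ^ (-(2 * η)) / n := by
    rw [← hsq]; field_simp
  rw [hEq]
  rw [show (D * (2 * C₁ + 1) ^ 2 + 1) * ε ^ (-(2 * η)) / n =
      (D * (2 * C₁ + 1) ^ 2 + 1) * (ε ^ (-(2 * η)) / n) by ring,
    show D * (2 * C₁ + 1) ^ 2 * ε ^ (-(2 * η)) / n =
      D * (2 * C₁ + 1) ^ 2 * (ε ^ (-(2 * η)) / n) by ring]
  refine mul_le_mul_of_nonneg_right (by linarith) ?_
  have : (0:ℝ) < ε ^ (-(2 * η)) := Real.rpow_pos_of_pos hε _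
  positivity
end
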